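/- arXiv:2309.01306 — 15 statements merged into one kernel-verified Lean document; each statement's English description precedes it below -/
import Mathlib

section
/- Let g : ℝⁿ → ℝ be convex, μ > 0, p ≥ 1. Suppose λ* = 0 is a global minimizer of φ(λ) = g(λ) + (μ/(1+1/p))·‖λ‖^{1+1/p}. Let λᵏ ∈ ℝⁿ with λᵏ ≠ 0, and let λᵏ⁺¹ be a global minimizer of λ ↦ g(λ) + (μ/2)·‖λᵏ‖^{(1/p)−1}·‖λ‖². Then λᵏ⁺¹ = 0 (i.e., λᵏ⁺¹ = λ*). -/
/-- If `λ* = 0` minimizes `g(λ) + (μ/(1+1/p))‖λ‖^{1+1/p}` and `λᵏ ≠ 0`, then any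
minimizer `λᵏ⁺¹` of `g(λ) + (μ/2)‖λᵏ‖^{1/p−1}‖λ‖²` equals `0`. -/
theorem fixed_point_iteration_zero_case
    (n : ℕ) (g : EuclideanSpace ℝ (Fin n) → ℝ)
    (hg : ConvexOn ℝ Set.univ g) (μ p : ℝ) (hμ : 0 < μ) (hp : 1 ≤ p)
    (hstar : ∀ z : EuclideanSpace ℝ (Fin n),
      g 0 + μ / (1 + 1 / p) * ‖(0 : EuclideanSpace ℝ (Fin n))‖ ^ (1 + 1 / p) ≤
        g z + μ / (1 + 1 / p) * ‖z‖ ^ (1 + 1 / p))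
    (lamk lamk1 : EuclideanSpace ℝ (Fin n)) (hk : lamk ≠ 0)
    (hmin : ∀ z : EuclideanSpace ℝ (Fin n),
      g lamk1 + μ / 2 * ‖lamk‖ ^ (1 / p - 1) * ‖lamk1‖ ^ 2 ≤
        g z + μ / 2 * ‖lamk‖ ^ (1 / p - 1) * ‖z‖ ^ 2) :
    lamk1 = 0 := by
  have hp0 : 0 < p := lt_of_lt_of_le one_pos hp
  have hinv : 0 < 1 / p := by positivity
  have he : 0 < 1 + 1 / p := by linarith
  set K : ℝ := ‖lamk1‖ ^ (1 + 1 / p) with hK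
  have hKnn : 0 ≤ K := Real.rpow_nonneg (norm_nonneg _) _
  set C : ℝ := μ / (1 + 1 / p) * K with hC
  have hCnn : 0 ≤ C := mul_nonneg (div_nonneg hμ.le he.le) hKnn
  -- Step 1: 0 is a global minimizer of g itself.
  have hg0 : g 0 ≤ g lamk1 := by
    have key : ∀ s : ℝ, 0 < s → s < 1 → g 0 - g lamk1 ≤ C * s := by
      intro s hs hs1
      set t : ℝ := s ^ p with ht
      have ht0 : 0 < t := Real.rpow_pos_of_pos hs p
      have ht1 : t < 1 := Real.rpow_lt_one hs.le hs1 hp0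
      have hts : t ^ (1 / p) = s := by
        rw [ht, ← Real.rpow_mul hs.le, mul_one_div_cancel hp0.ne', Real.rpow_one]
      have hte : t ^ (1 + 1 / p) = t * s := by
        rw [Real.rpow_add ht0, Real.rpow_one, hts]
      have hstar' := hstar (t • lamk1)
      rw [norm_zero, Real.zero_rpow he.ne', mul_zero, add_zero] at hstar'
      have hnorm : ‖t • lamk1‖ ^ (1 + 1 / p) = (t * s) * K := by
        rw [norm_smul, Real.norm_of_nonneg ht0.le,
          Real.mul_rpow ht0.le (norm_nonneg _), hte, hK]
      rw [hnorm] at hstar'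
      have hconv : g (t • lamk1) ≤ t * g lamk1 + (1 - t) * g 0 := by
        have := hg.2 (Set.mem_univ lamk1) (Set.mem_univ (0 : EuclideanSpace ℝ (Fin n)))
          ht0.le (by linarith : (0:ℝ) ≤ 1 - t) (by ring)
        simpa using this
      have hmul : t * (g 0 - g lamk1) ≤ t * (C * s) := by rw [hC]; nlinarith
      exact le_of_mul_le_mul_left hmul ht0
    by_contra hcon
    push_neg at hcon
    have hδ : 0 < g 0 - g lamk1 := by linarith
    have hden : 0 < 2 * (C + 1) := by linarith
    have hs0 : 0 < min (1 / 2) ((g 0 - g lamk1) / (2 * (C + 1))) :=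
      lt_min (by norm_num) (div_pos hδ hden)
    have hs1 : min (1 / 2) ((g 0 - g lamk1) / (2 * (C + 1))) < 1 :=
      lt_of_le_of_lt (min_le_left _ _) (by norm_num)
    have h1 := key _ hs0 hs1
    have h2 : C * min (1 / 2) ((g 0 - g lamk1) / (2 * (C + 1))) ≤
        C * ((g 0 - g lamk1) / (2 * (C + 1))) :=
      mul_le_mul_of_nonneg_left (min_le_right _ _) hCnn
    have h3 : C * ((g 0 - g lamk1) / (2 * (C + 1))) < g 0 - g lamk1 := by
      rw [mul_div_assoc', div_lt_iff₀ hden]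
      nlinarith
    linarith
  -- Step 2: conclude.
  have h0 := hmin 0
  rw [norm_zero] at h0
  have ha : 0 < μ / 2 * ‖lamk‖ ^ (1 / p - 1) :=
    mul_pos (by linarith) (Real.rpow_pos_of_pos (norm_pos_iff.mpr hk) _)
  have hx : ‖lamk1‖ ^ 2 ≤ 0 := by nlinarith
  have : ‖lamk1‖ = 0 := by nlinarith [norm_nonneg lamk1, sq_nonneg ‖lamk1‖]
  exact norm_eq_zero.mp this
end

section
/- Let g : ℝⁿ → ℝ be convex, μ > 0, p ≥ 1. Suppose λ* ≠ 0 is a global minimizer of φ(λ) = g(λ) + (μ/(1+1/p))·‖λ‖^{1+1/p}, let λᵏ ∈ ℝⁿ with λᵏ ≠ 0, and let λᵏ⁺¹ be a global minimizer of λ ↦ g(λ) + (μ/2)·‖λᵏ‖^{(1/p)−1}·‖λ‖². Then ⟨λᵏ⁺¹ − λ*, ‖λᵏ‖^{1−1/p}·λ* − ‖λ*‖^{1−1/p}·λᵏ⁺¹⟩ ≥ 0. -/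
open scoped RealInnerProductSpace

private lemma eps_aux' {a b K : ℝ} (hK : 0 ≤ K)
    (h : ∀ t : ℝ, 0 < t → t ≤ 1 → a ≤ b + K * t) : a ≤ b := by
  refine le_of_forall_pos_le_add fun ε hε => ?_
  have hK1 : (0:ℝ) < K + 1 := by linarith
  have ht0 : 0 < min 1 (ε / (K + 1)) := lt_min one_pos (div_pos hε hK1)
  have h1 := h _ ht0 (min_le_left _ _)
  have h2 : K * min 1 (ε / (K + 1)) ≤ ε := by
    have hm := min_le_right 1 (ε / (K + 1))
    have h4 : K * min 1 (ε / (K + 1)) ≤ K * (ε / (K + 1)) :=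
      mul_le_mul_of_nonneg_left hm hK
    have h5 : K * (ε / (K + 1)) ≤ ε := by
      rw [mul_div_assoc'] at *
      rw [div_le_iff₀ hK1]
      nlinarith
    linarith
  linarith

private lemma subgrad_quad' {n : ℕ} {g : EuclideanSpace ℝ (Fin n) → ℝ}
    (hg : ConvexOn ℝ Set.univ g) {K : ℝ} (hK : 0 ≤ K)
    {x : EuclideanSpace ℝ (Fin n)}
    (hmin : ∀ z, g x + K * ‖x‖ ^ 2 ≤ g z + K * ‖z‖ ^ 2)
    (z : EuclideanSpace ℝ (Fin n)) :
    g x ≤ g z + 2 * K * ⟪x, z - x⟫ := by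
  set d := z - x with hd
  apply eps_aux' (K := K * ‖d‖ ^ 2) (mul_nonneg hK (by positivity))
  intro t ht0 ht1
  have hconv := hg.2 (Set.mem_univ x) (Set.mem_univ z)
    (show (0:ℝ) ≤ 1 - t by linarith) ht0.le (by ring)
  have hpt : (1 - t) • x + t • z = x + t • d := by rw [hd]; module
  have hnorm : ‖x + t • d‖ ^ 2 = ‖x‖ ^ 2 + 2 * (t * ⟪x, d⟫) + t ^ 2 * ‖d‖ ^ 2 := by
    rw [@norm_add_sq_real, real_inner_smul_right, norm_smul]
    simp only [Real.norm_eq_abs, abs_of_pos ht0, mul_pow]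
  have hm := hmin (x + t • d)
  rw [hnorm] at hm
  rw [hpt] at hconv
  simp only [smul_eq_mul] at hconv
  have h2 : t * g x ≤ t * (g z + 2 * K * ⟪x, d⟫ + K * ‖d‖ ^ 2 * t) := by nlinarith
  exact le_of_mul_le_mul_left h2 ht0

private lemma subgrad_pow' {n : ℕ} {g : EuclideanSpace ℝ (Fin n) → ℝ}
    (hg : ConvexOn ℝ Set.univ g) {μ q : ℝ} (hμ : 0 < μ) (hq1 : 1 < q) (hq2 : q ≤ 2)
    {x : EuclideanSpace ℝ (Fin n)} (hx : x ≠ 0)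
    (hmin : ∀ z, g x + μ / q * ‖x‖ ^ q ≤ g z + μ / q * ‖z‖ ^ q)
    (z : EuclideanSpace ℝ (Fin n)) :
    g x ≤ g z + μ * ‖x‖ ^ (q - 2) * ⟪x, z - x⟫ := by
  set d := z - x with hd
  have hq0 : (0:ℝ) < q := by linarith
  have hα : 0 < μ / q := by positivity
  have hxn : (0:ℝ) < ‖x‖ := norm_pos_iff.mpr hx
  have hx2 : (0:ℝ) < ‖x‖ ^ 2 := by positivity
  have hCpos : (0:ℝ) < ‖x‖ ^ (q - 2) := Real.rpow_pos_of_pos hxn _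
  apply eps_aux' (K := μ / 2 * ‖x‖ ^ (q - 2) * ‖d‖ ^ 2) (by positivity)
  intro t ht0 ht1
  have hnorm : ‖x + t • d‖ ^ 2 = ‖x‖ ^ 2 + (2 * (t * ⟪x, d⟫) + t ^ 2 * ‖d‖ ^ 2) := by
    rw [@norm_add_sq_real, real_inner_smul_right, norm_smul]
    simp only [Real.norm_eq_abs, abs_of_pos ht0, mul_pow]
    ring
  have key : ‖x + t • d‖ ^ q ≤ ‖x‖ ^ q
      + q / 2 * ‖x‖ ^ (q - 2) * (2 * (t * ⟪x, d⟫) + t ^ 2 * ‖d‖ ^ 2) := by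
    have hsnn : (0:ℝ) ≤ ‖x + t • d‖ ^ 2 := by positivity
    have hber := rpow_one_add_le_one_add_mul_self
      (s := ‖x + t • d‖ ^ 2 / ‖x‖ ^ 2 - 1)
      (by have : (0:ℝ) ≤ ‖x + t • d‖ ^ 2 / ‖x‖ ^ 2 := div_nonneg hsnn hx2.le; linarith)
      (p := q / 2) (by linarith) (by linarith)
    rw [show (1:ℝ) + (‖x + t • d‖ ^ 2 / ‖x‖ ^ 2 - 1) = ‖x + t • d‖ ^ 2 / ‖x‖ ^ 2 by ring]
      at hber
    rw [Real.div_rpow hsnn hx2.le] at hber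
    have hs0r : (0:ℝ) < (‖x‖ ^ 2 : ℝ) ^ (q / 2) := Real.rpow_pos_of_pos hx2 _
    rw [div_le_iff₀ hs0r] at hber
    -- hber : (‖x+t•d‖^2)^(q/2) ≤ (1 + q/2*(s/s₀-1)) * s₀^(q/2)
    have hA : ‖x + t • d‖ ^ q = ((‖x + t • d‖ ^ 2 : ℝ)) ^ (q / 2) := by
      rw [← Real.rpow_natCast ‖x + t • d‖ 2, ← Real.rpow_mul (norm_nonneg _)]
      norm_num
      rw [show (2:ℝ) * (q / 2) = q by ring]
    have hB : ‖x‖ ^ q = ((‖x‖ ^ 2 : ℝ)) ^ (q / 2) := by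
      rw [← Real.rpow_natCast ‖x‖ 2, ← Real.rpow_mul (norm_nonneg _)]
      norm_num
      rw [show (2:ℝ) * (q / 2) = q by ring]
    have hC : ‖x‖ ^ (q - 2) = ((‖x‖ ^ 2 : ℝ)) ^ (q / 2) / ‖x‖ ^ 2 := by
      rw [← Real.rpow_natCast ‖x‖ 2, ← Real.rpow_mul (norm_nonneg _),
        ← Real.rpow_sub hxn]
      norm_num
      rw [show (2:ℝ) * (q / 2) - 2 = q - 2 by ring]
    have heq : (1 + q / 2 * (‖x + t • d‖ ^ 2 / ‖x‖ ^ 2 - 1)) * ((‖x‖ ^ 2 : ℝ)) ^ (q / 2)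
        = ((‖x‖ ^ 2 : ℝ)) ^ (q / 2)
          + q / 2 * (((‖x‖ ^ 2 : ℝ)) ^ (q / 2) / ‖x‖ ^ 2)
            * (‖x + t • d‖ ^ 2 - ‖x‖ ^ 2) := by
      field_simp
    rw [heq] at hber
    rw [hA, hB, hC]
    have hdiff : ‖x + t • d‖ ^ 2 - ‖x‖ ^ 2 = 2 * (t * ⟪x, d⟫) + t ^ 2 * ‖d‖ ^ 2 := by
      rw [hnorm]; ring
    rw [hdiff] at hber
    exact hber
  have hconv := hg.2 (Set.mem_univ x) (Set.mem_univ z)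
    (show (0:ℝ) ≤ 1 - t by linarith) ht0.le (by ring)
  have hpt : (1 - t) • x + t • z = x + t • d := by rw [hd]; module
  rw [hpt] at hconv
  simp only [smul_eq_mul] at hconv
  have hm := hmin (x + t • d)
  have h3 : μ / q * ‖x + t • d‖ ^ q ≤ μ / q * ‖x‖ ^ q
      + μ / 2 * (‖x‖ ^ (q - 2) * (2 * (t * ⟪x, d⟫) + t ^ 2 * ‖d‖ ^ 2)) := by
    have h4 := mul_le_mul_of_nonneg_left key hα.le
    have h5 : μ / q * (‖x‖ ^ q
        + q / 2 * ‖x‖ ^ (q - 2) * (2 * (t * ⟪x, d⟫) + t ^ 2 * ‖d‖ ^ 2))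
        = μ / q * ‖x‖ ^ q
          + μ / 2 * (‖x‖ ^ (q - 2) * (2 * (t * ⟪x, d⟫) + t ^ 2 * ‖d‖ ^ 2)) := by
      field_simp
    linarith [h4, h5.le, h5.ge]
  have h2 : t * g x ≤ t * (g z + μ * ‖x‖ ^ (q - 2) * ⟪x, d⟫
      + μ / 2 * ‖x‖ ^ (q - 2) * ‖d‖ ^ 2 * t) := by nlinarith
  exact le_of_mul_le_mul_left h2 ht0

/-- One step of the fixed point iteration satisfies
`⟨λᵏ⁺¹ − λ*, ‖λᵏ‖^{1−1/p}λ* − ‖λ*‖^{1−1/p}λᵏ⁺¹⟩ ≥ 0`. -/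
theorem fixed_point_iteration_inner_ineq
    (n : ℕ) (g : EuclideanSpace ℝ (Fin n) → ℝ)
    (hg : ConvexOn ℝ Set.univ g) (μ p : ℝ) (hμ : 0 < μ) (hp : 1 ≤ p)
    (lamstar : EuclideanSpace ℝ (Fin n)) (hstar0 : lamstar ≠ 0)
    (hstar : ∀ z : EuclideanSpace ℝ (Fin n),
      g lamstar + μ / (1 + 1 / p) * ‖lamstar‖ ^ (1 + 1 / p) ≤
        g z + μ / (1 + 1 / p) * ‖z‖ ^ (1 + 1 / p))
    (lamk lamk1 : EuclideanSpace ℝ (Fin n)) (hk : lamk ≠ 0)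
    (hmin : ∀ z : EuclideanSpace ℝ (Fin n),
      g lamk1 + μ / 2 * ‖lamk‖ ^ (1 / p - 1) * ‖lamk1‖ ^ 2 ≤
        g z + μ / 2 * ‖lamk‖ ^ (1 / p - 1) * ‖z‖ ^ 2) :
    0 ≤ ⟪lamk1 - lamstar,
          ‖lamk‖ ^ (1 - 1 / p) • lamstar - ‖lamstar‖ ^ (1 - 1 / p) • lamk1⟫ := by
  have hp0 : (0:ℝ) < p := lt_of_lt_of_le one_pos hp
  have hinvp : (0:ℝ) < 1 / p := by positivity
  have hinvp1 : 1 / p ≤ 1 := by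
    rw [div_le_one hp0]; linarith
  have hkn : (0:ℝ) < ‖lamk‖ := norm_pos_iff.mpr hk
  have hsn : (0:ℝ) < ‖lamstar‖ := norm_pos_iff.mpr hstar0
  have hcpos : (0:ℝ) < ‖lamk‖ ^ (1 / p - 1) := Real.rpow_pos_of_pos hkn _
  have hbpos : (0:ℝ) < ‖lamstar‖ ^ (1 / p - 1) := Real.rpow_pos_of_pos hsn _
  have H1 := subgrad_quad' hg
    (K := μ / 2 * ‖lamk‖ ^ (1 / p - 1)) (by positivity) hmin lamstar
  have H2 := subgrad_pow' hg (q := 1 + 1 / p) hμ (by linarith) (by linarith)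
    hstar0 hstar lamk1
  rw [show (1 + 1 / p) - 2 = 1 / p - 1 by ring] at H2
  set m := ⟪lamk1, lamstar⟫ with hmdef
  set n1 := ⟪lamk1, lamk1⟫ with hn1def
  set n2 := ⟪lamstar, lamstar⟫ with hn2def
  have e1 : ⟪lamk1, lamstar - lamk1⟫ = m - n1 := by rw [inner_sub_right]
  have e2 : ⟪lamstar, lamk1 - lamstar⟫ = m - n2 := by
    rw [inner_sub_right, real_inner_comm lamk1 lamstar, ← hmdef, ← hn2def]
  rw [e1] at H1
  rw [e2] at H2
  set c := ‖lamk‖ ^ (1 / p - 1) with hcdef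
  set b := ‖lamstar‖ ^ (1 / p - 1) with hbdef
  have hsum : 0 ≤ μ * c * (m - n1) + μ * b * (m - n2) := by nlinarith [H1, H2]
  have hA : ‖lamk‖ ^ (1 - 1 / p) = c⁻¹ := by
    rw [hcdef, show (1 - 1 / p) = -(1 / p - 1) by ring, Real.rpow_neg hkn.le]
  have hB : ‖lamstar‖ ^ (1 - 1 / p) = b⁻¹ := by
    rw [hbdef, show (1 - 1 / p) = -(1 / p - 1) by ring, Real.rpow_neg hsn.le]
  rw [hA, hB]
  have expand : ⟪lamk1 - lamstar, c⁻¹ • lamstar - b⁻¹ • lamk1⟫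
      = c⁻¹ * m - b⁻¹ * n1 - c⁻¹ * n2 + b⁻¹ * m := by
    simp only [inner_sub_left, inner_sub_right, real_inner_smul_right,
      real_inner_comm lamk1 lamstar]
    rw [← hmdef, ← hn1def, ← hn2def]
    ring
  rw [expand]
  have h9 : c⁻¹ * m - b⁻¹ * n1 - c⁻¹ * n2 + b⁻¹ * m
      = (μ * c * (m - n1) + μ * b * (m - n2)) / (μ * c * b) := by
    field_simp
    ring
  rw [h9]
  exact div_nonneg hsum (by positivity)
end

section
/- Let g : ℝⁿ → ℝ be convex, μ > 0, p ≥ 1. Suppose λ* ≠ 0 is a global minimizer of φ(λ) = g(λ) + (μ/(1+1/p))·‖λ‖^{1+1/p}, let λᵏ ∈ ℝⁿ with λᵏ ≠ 0, and let λᵏ⁺¹ be a global minimizer of λ ↦ g(λ) + (μ/2)·‖λᵏ‖^{(1/p)−1}·‖λ‖². Then (‖λᵏ‖^{1−1/p} − ‖λ*‖^{1−1/p})·⟨λᵏ⁺¹ − λ*, λᵏ⁺¹⟩ ≥ ‖λᵏ‖^{1−1/p}·‖λᵏ⁺¹ − λ*‖². -/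
set_option maxHeartbeats 1000000

open scoped RealInnerProductSpace

lemma bern_rpow {s b q : ℝ} (hs : 0 ≤ s) (hb : 0 ≤ b) (hq : 1 ≤ q) :
    s ^ q - b ^ q ≤ q * s ^ (q - 1) * (s - b) := by
  rcases hs.eq_or_lt with h0 | hs'
  · rcases hq.eq_or_lt with h1 | h1
    · rw [← h0, ← h1]
      simp [Real.rpow_one]
    · rw [← h0, Real.zero_rpow (by positivity : q ≠ 0),
        Real.zero_rpow (by linarith : q - 1 ≠ 0)]
      have hbq : 0 ≤ b ^ q := Real.rpow_nonneg hb q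
      nlinarith
  · have hx : (-1 : ℝ) ≤ b / s - 1 := by
      have : 0 ≤ b / s := div_nonneg hb hs
      linarith
    have h := one_add_mul_self_le_rpow_one_add hx hq
    have h2 : (1 + (b / s - 1)) = b / s := by ring
    rw [h2, Real.div_rpow hb hs] at h
    have hsq : 0 < s ^ q := Real.rpow_pos_of_pos hs' q
    have hs1 : s ^ (q - 1) * s = s ^ q := by
      nth_rewrite 2 [← Real.rpow_one s]
      rw [← Real.rpow_add hs']
      ring_nf
    have h3 : (1 + q * (b / s - 1)) * s ^ q ≤ b ^ q := (le_div_iff₀ hsq).mp h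
    have key : b / s * s ^ q = b * s ^ (q - 1) := by
      rw [← hs1]
      field_simp
    have expand : (1 + q * (b / s - 1)) * s ^ q
        = s ^ q + q * (b / s * s ^ q) - q * s ^ q := by ring
    rw [expand, key] at h3
    have tgt_eq : q * s ^ (q - 1) * (s - b) = q * s ^ q - q * (b * s ^ (q - 1)) := by
      rw [← hs1]; ring
    linarith [tgt_eq]

/-- One step of the fixed point iteration satisfies
`(‖λᵏ‖^{1−1/p} − ‖λ*‖^{1−1/p})⟨λᵏ⁺¹ − λ*, λᵏ⁺¹⟩ ≥ ‖λᵏ‖^{1−1/p}‖λᵏ⁺¹ − λ*‖²`. -/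
theorem fixed_point_iteration_key_ineq
    (n : ℕ) (g : EuclideanSpace ℝ (Fin n) → ℝ)
    (hg : ConvexOn ℝ Set.univ g) (μ p : ℝ) (hμ : 0 < μ) (hp : 1 ≤ p)
    (lamstar : EuclideanSpace ℝ (Fin n)) (hstar0 : lamstar ≠ 0)
    (hstar : ∀ z : EuclideanSpace ℝ (Fin n),
      g lamstar + μ / (1 + 1 / p) * ‖lamstar‖ ^ (1 + 1 / p) ≤
        g z + μ / (1 + 1 / p) * ‖z‖ ^ (1 + 1 / p))
    (lamk lamk1 : EuclideanSpace ℝ (Fin n)) (hk : lamk ≠ 0)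
    (hmin : ∀ z : EuclideanSpace ℝ (Fin n),
      g lamk1 + μ / 2 * ‖lamk‖ ^ (1 / p - 1) * ‖lamk1‖ ^ 2 ≤
        g z + μ / 2 * ‖lamk‖ ^ (1 / p - 1) * ‖z‖ ^ 2) :
    (‖lamk‖ ^ (1 - 1 / p) - ‖lamstar‖ ^ (1 - 1 / p)) * ⟪lamk1 - lamstar, lamk1⟫ ≥
      ‖lamk‖ ^ (1 - 1 / p) * ‖lamk1 - lamstar‖ ^ 2 := by
  have hp0 : (0:ℝ) < p := lt_of_lt_of_le one_pos hp
  have hp1 : (0:ℝ) < 1 / p := by positivity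
  set a := ‖lamk‖ with ha_def
  set b := ‖lamstar‖ with hb_def
  have ha : 0 < a := norm_pos_iff.mpr hk
  have hb : 0 < b := norm_pos_iff.mpr hstar0
  set q : ℝ := 1 + 1 / p with hq_def
  have hq1 : (1:ℝ) < q := by simp only [hq_def]; linarith
  have hq0 : q ≠ 0 := by linarith
  set d := lamk1 - lamstar with hd_def
  set I1 := ⟪lamk1, d⟫ with hI1_def
  set I2 := ⟪lamstar, d⟫ with hI2_def
  have hI2 : I2 = I1 - ‖d‖ ^ 2 := by
    have hls : lamstar = lamk1 - d := by simp [hd_def]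
    rw [hI2_def, hI1_def, hls, inner_sub_left, real_inner_self_eq_norm_sq]
  -- Step A : from the minimality of lamk1
  have stepA : ∀ t : ℝ, 0 < t → t ≤ 1 →
      g lamk1 - g lamstar ≤ μ / 2 * a ^ (1/p - 1) * (-2 * I1 + t * ‖d‖ ^ 2) := by
    intro t ht ht1
    have hz := hmin ((1 - t) • lamk1 + t • lamstar)
    have hconv := hg.2 (Set.mem_univ lamk1) (Set.mem_univ lamstar)
      (by linarith : (0:ℝ) ≤ 1 - t) ht.le (by ring)
    have hzd : (1 - t) • lamk1 + t • lamstar = lamk1 - t • d := by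
      rw [hd_def]; module
    rw [hzd] at hz hconv
    simp only [smul_eq_mul] at hconv
    have hnorm : ‖lamk1 - t • d‖ ^ 2 = ‖lamk1‖ ^ 2 - 2 * (t * I1) + t ^ 2 * ‖d‖ ^ 2 := by
      rw [norm_sub_sq_real, real_inner_smul_right, norm_smul, Real.norm_eq_abs,
        abs_of_pos ht, mul_pow]
    rw [hnorm] at hz
    have key : t * (g lamk1 - g lamstar)
        ≤ t * (μ / 2 * a ^ (1/p - 1) * (-2 * I1 + t * ‖d‖ ^ 2)) := by
      linarith [hz, hconv]
    exact le_of_mul_le_mul_left key ht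
  -- Step B : from the minimality of lamstar
  have stepB : ∀ t : ℝ, 0 < t → t ≤ 1 →
      g lamstar - g lamk1
        ≤ μ * ‖lamstar + t • d‖ ^ (q - 1) * (2 * I2 + t * ‖d‖ ^ 2) / (2 * b) := by
    intro t ht ht1
    have hz := hstar ((1 - t) • lamstar + t • lamk1)
    have hconv := hg.2 (Set.mem_univ lamstar) (Set.mem_univ lamk1)
      (by linarith : (0:ℝ) ≤ 1 - t) ht.le (by ring)
    have hzd : (1 - t) • lamstar + t • lamk1 = lamstar + t • d := by
      rw [hd_def]; module
    rw [hzd] at hz hconv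
    simp only [smul_eq_mul] at hconv
    set s := ‖lamstar + t • d‖ with hs_def
    have hs0 : 0 ≤ s := norm_nonneg _
    have hnorm : s ^ 2 = b ^ 2 + 2 * (t * I2) + t ^ 2 * ‖d‖ ^ 2 := by
      rw [hs_def, norm_add_sq_real, real_inner_smul_right, norm_smul, Real.norm_eq_abs,
        abs_of_pos ht, mul_pow]
    -- s - b ≤ (2 t I2 + t² ‖d‖²) / (2 b)
    have hsb : s - b ≤ (2 * (t * I2) + t ^ 2 * ‖d‖ ^ 2) / (2 * b) := by
      rw [le_div_iff₀ (by linarith : (0:ℝ) < 2 * b)]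
      nlinarith [sq_nonneg (s - b)]
    have hbern := bern_rpow hs0 hb.le hq1.le
    have hqs : 0 ≤ q * s ^ (q - 1) := mul_nonneg (by linarith) (Real.rpow_nonneg hs0 _)
    have h4 : s ^ q - b ^ q
        ≤ q * s ^ (q - 1) * ((2 * (t * I2) + t ^ 2 * ‖d‖ ^ 2) / (2 * b)) :=
      hbern.trans (mul_le_mul_of_nonneg_left hsb hqs)
    have hK : (0:ℝ) ≤ μ / q := div_nonneg hμ.le (by linarith)
    have h5 : t * (g lamstar - g lamk1) ≤ μ / q * (s ^ q - b ^ q) := by linarith [hz, hconv]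
    have h6 : t * (g lamstar - g lamk1)
        ≤ μ / q * (q * s ^ (q - 1) * ((2 * (t * I2) + t ^ 2 * ‖d‖ ^ 2) / (2 * b))) :=
      h5.trans (mul_le_mul_of_nonneg_left h4 hK)
    have hrw : μ / q * (q * s ^ (q - 1) * ((2 * (t * I2) + t ^ 2 * ‖d‖ ^ 2) / (2 * b)))
        = t * (μ * s ^ (q - 1) * (2 * I2 + t * ‖d‖ ^ 2) / (2 * b)) := by
      field_simp
    rw [hrw] at h6
    exact le_of_mul_le_mul_left h6 ht
  -- Combine and take the limit t → 0⁺
  set S : ℝ → ℝ := fun t =>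
    μ / 2 * a ^ (1/p - 1) * (-2 * I1 + t * ‖d‖ ^ 2)
      + μ * ‖lamstar + t • d‖ ^ (q - 1) * (2 * I2 + t * ‖d‖ ^ 2) / (2 * b) with hS_def
  have hSpos : ∀ t ∈ Set.Ioc (0:ℝ) 1, 0 ≤ S t := by
    intro t ht
    have hA := stepA t ht.1 ht.2
    have hB := stepB t ht.1 ht.2
    simp only [hS_def]
    linarith
  have hScont : ContinuousAt S 0 := by
    have hn : Continuous fun t : ℝ => ‖lamstar + t • d‖ :=
      (continuous_const.add (continuous_id.smul continuous_const)).norm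
    have hval : ‖lamstar + (0:ℝ) • d‖ = b := by simp [hb_def]
    have hcomp : ContinuousAt (fun t : ℝ => ‖lamstar + t • d‖ ^ (q - 1)) 0 :=
      (hn.continuousAt (x := (0:ℝ))).rpow_const (Or.inr (by linarith))
    simp only [hS_def]
    fun_prop
  have h0 : 0 ≤ S 0 := by
    have htend : Filter.Tendsto S (nhdsWithin 0 (Set.Ioi 0)) (nhds (S 0)) :=
      hScont.tendsto.mono_left nhdsWithin_le_nhds
    refine ge_of_tendsto htend ?_
    filter_upwards [Ioc_mem_nhdsGT_of_mem
      (by constructor <;> norm_num : (0:ℝ) ∈ Set.Ico (0:ℝ) 1)] with t ht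
    exact hSpos t ht
  have hq' : q - 1 = 1 / p := by rw [hq_def]; ring
  have hbpow : b ^ (q - 1) = b * b ^ (1/p - 1) := by
    rw [show q - 1 = 1 + (1/p - 1) by rw [hq_def]; ring, Real.rpow_add hb, Real.rpow_one]
  have hS0 : S 0 = -(μ * (a ^ (1/p - 1) * I1)) + μ * (b ^ (1/p - 1) * I2) := by
    have hval : ‖lamstar + (0:ℝ) • d‖ = b := by simp [hb_def]
    simp only [hS_def, hval, zero_mul, add_zero]
    rw [hbpow]
    field_simp
  rw [hS0] at h0
  have hfin' : a ^ (1/p - 1) * I1 ≤ b ^ (1/p - 1) * I2 := by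
    have hfin : μ * (a ^ (1/p - 1) * I1) ≤ μ * (b ^ (1/p - 1) * I2) := by linarith
    exact le_of_mul_le_mul_left hfin hμ
  have ha1 : a ^ (1/p - 1) * a ^ (1 - 1/p) = 1 := by
    rw [← Real.rpow_add ha, show (1/p - 1) + (1 - 1/p) = (0:ℝ) by ring, Real.rpow_zero]
  have hb1 : b ^ (1/p - 1) * b ^ (1 - 1/p) = 1 := by
    rw [← Real.rpow_add hb, show (1/p - 1) + (1 - 1/p) = (0:ℝ) by ring, Real.rpow_zero]
  have hmulpos : (0:ℝ) ≤ a ^ (1 - 1/p) * b ^ (1 - 1/p) :=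
    (mul_pos (Real.rpow_pos_of_pos ha _) (Real.rpow_pos_of_pos hb _)).le
  have hmul := mul_le_mul_of_nonneg_right hfin' hmulpos
  have e1 : a ^ (1/p - 1) * I1 * (a ^ (1 - 1/p) * b ^ (1 - 1/p)) = b ^ (1 - 1/p) * I1 := by
    linear_combination I1 * b ^ (1 - 1/p) * ha1
  have e2 : b ^ (1/p - 1) * I2 * (a ^ (1 - 1/p) * b ^ (1 - 1/p)) = a ^ (1 - 1/p) * I2 := by
    linear_combination I2 * a ^ (1 - 1/p) * hb1
  rw [e1, e2, hI2] at hmul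
  have hcomm : ⟪d, lamk1⟫ = I1 := by rw [hI1_def]; exact (real_inner_comm d lamk1).symm
  rw [ge_iff_le, hcomm]
  nlinarith [hmul]
end

section
/- Let g : ℝⁿ → ℝ be convex, μ > 0, p ≥ 1. Suppose λ* ≠ 0 is a global minimizer of φ(λ) = g(λ) + (μ/(1+1/p))·‖λ‖^{1+1/p}, let λᵏ ∈ ℝⁿ with λᵏ ≠ 0, and let λᵏ⁺¹ be a global minimizer of λ ↦ g(λ) + (μ/2)·‖λᵏ‖^{(1/p)−1}·‖λ‖². Then (‖λᵏ‖^{1−1/p} − ‖λ*‖^{1−1/p})·(‖λᵏ⁺¹‖² − ‖λ*‖²) ≥ 0. -/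
/-!
Write `a = ‖λᵏ‖`, `s = ‖λ*‖`, `t = ‖λᵏ⁺¹‖`, `q = 1 + 1/p`. Testing the minimality of `λᵏ⁺¹` at `λ*`
and that of `λ*` at `λᵏ⁺¹`, the terms in `g` cancel and leave
`(μ/2) a^{1/p-1} (t² - s²) ≤ (μ/q) (t^q - s^q)`.
Since `q/2 ≤ 1`, the map `x ↦ x^{q/2}` is concave, so its tangent line at `s²` bounds the right-hand side
by `(μ/2) s^{1/p-1} (t² - s²)`. Hence `(a^{-(1-1/p)} - s^{-(1-1/p)}) (t² - s²) ≤ 0`, and the first factor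
has the sign opposite to that of `a^{1-1/p} - s^{1-1/p}`.
-/

namespace Real

theorem rpow_sub_rpow_le_mul_sub {e x y : ℝ} (he0 : 0 ≤ e) (he1 : e ≤ 1) (hx : 0 ≤ x)
    (hy : 0 < y) : x ^ e - y ^ e ≤ e * y ^ (e - 1) * (x - y) := by
  have hbern := rpow_one_add_le_one_add_mul_self (s := x / y - 1)
    (by linarith [div_nonneg hx hy.le]) he0 he1
  rw [add_sub_cancel, div_rpow hx hy.le, div_le_iff₀ (rpow_pos_of_pos hy e)] at hbern
  have hye : y ^ e = y ^ (e - 1) * y := by rw [rpow_sub_one hy.ne']; field_simp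
  calc x ^ e - y ^ e ≤ (1 + e * (x / y - 1)) * y ^ e - y ^ e := by linarith
    _ = e * y ^ (e - 1) * (x - y) := by rw [hye]; field_simp; ring

theorem rpow_sub_rpow_le_of_le_two {q s t : ℝ} (hq0 : 0 ≤ q) (hq2 : q ≤ 2) (ht : 0 ≤ t)
    (hs : 0 < s) : t ^ q - s ^ q ≤ q / 2 * s ^ (q - 2) * (t ^ 2 - s ^ 2) := by
  have hsq {u : ℝ} (hu : 0 ≤ u) (r : ℝ) : (u ^ 2) ^ (r / 2) = u ^ r := by
    rw [← rpow_natCast, ← rpow_mul hu]; congr 1; ring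
  have htangent := rpow_sub_rpow_le_mul_sub (e := q / 2) (by linarith) (by linarith)
    (sq_nonneg t) (pow_pos hs 2)
  rwa [hsq ht, hsq hs.le, show q / 2 - 1 = (q - 2) / 2 by ring, hsq hs.le] at htangent

end Real

theorem sub_mul_nonneg_of_inv_mul_le {u v x : ℝ} (hu : 0 < u) (hv : 0 < v)
    (h : u⁻¹ * x ≤ v⁻¹ * x) : 0 ≤ (u - v) * x := by
  have hfactor : (u - v) * x = u * v * (v⁻¹ * x - u⁻¹ * x) := by field_simp
  rw [hfactor]
  exact mul_nonneg (mul_pos hu hv).le (sub_nonneg.mpr h)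

theorem fixed_point_iteration_norm_sq_monotone_general
    (n : ℕ) (g : EuclideanSpace ℝ (Fin n) → ℝ)
    (μ p : ℝ) (hμ : 0 < μ) (hp : 1 ≤ p)
    (lamstar : EuclideanSpace ℝ (Fin n)) (hstar0 : lamstar ≠ 0)
    (hstar : ∀ z : EuclideanSpace ℝ (Fin n),
      g lamstar + μ / (1 + 1 / p) * ‖lamstar‖ ^ (1 + 1 / p) ≤
        g z + μ / (1 + 1 / p) * ‖z‖ ^ (1 + 1 / p))
    (lamk lamk1 : EuclideanSpace ℝ (Fin n)) (hk : lamk ≠ 0)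
    (hmin : ∀ z : EuclideanSpace ℝ (Fin n),
      g lamk1 + μ / 2 * ‖lamk‖ ^ (1 / p - 1) * ‖lamk1‖ ^ 2 ≤
        g z + μ / 2 * ‖lamk‖ ^ (1 / p - 1) * ‖z‖ ^ 2) :
    (‖lamk‖ ^ (1 - 1 / p) - ‖lamstar‖ ^ (1 - 1 / p)) * (‖lamk1‖ ^ 2 - ‖lamstar‖ ^ 2) ≥ 0 := by
  have hs : 0 < ‖lamstar‖ := norm_pos_iff.mpr hstar0
  have ha : 0 < ‖lamk‖ := norm_pos_iff.mpr hk
  have hp0 : 0 < p := by linarith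
  have hq : 0 < 1 + 1 / p := by positivity
  have hexp : 1 / p - 1 = -(1 - 1 / p) := by ring
  have hcompare : μ / 2 * ‖lamk‖ ^ (1 / p - 1) * (‖lamk1‖ ^ 2 - ‖lamstar‖ ^ 2) ≤
      μ / (1 + 1 / p) * (‖lamk1‖ ^ (1 + 1 / p) - ‖lamstar‖ ^ (1 + 1 / p)) := by
    linarith [hmin lamstar, hstar lamk1]
  have htangent := Real.rpow_sub_rpow_le_of_le_two hq.le
    (by linarith [(div_le_one hp0).mpr hp]) (norm_nonneg lamk1) hs
  have hcancel : μ / (1 + 1 / p) * ((1 + 1 / p) / 2 * ‖lamstar‖ ^ (1 + 1 / p - 2) *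
      (‖lamk1‖ ^ 2 - ‖lamstar‖ ^ 2)) =
      μ / 2 * (‖lamstar‖ ^ (1 / p - 1) * (‖lamk1‖ ^ 2 - ‖lamstar‖ ^ 2)) := by
    rw [show 1 + 1 / p - 2 = 1 / p - 1 by ring]; field_simp
  have hinv : ‖lamk‖ ^ (1 / p - 1) * (‖lamk1‖ ^ 2 - ‖lamstar‖ ^ 2) ≤
      ‖lamstar‖ ^ (1 / p - 1) * (‖lamk1‖ ^ 2 - ‖lamstar‖ ^ 2) := by
    refine le_of_mul_le_mul_left ?_ (half_pos hμ)
    linarith [mul_le_mul_of_nonneg_left htangent (div_pos hμ hq).le]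
  rw [hexp, Real.rpow_neg ha.le, Real.rpow_neg hs.le] at hinv
  exact sub_mul_nonneg_of_inv_mul_le (Real.rpow_pos_of_pos ha _) (Real.rpow_pos_of_pos hs _) hinv

/-- One step of the fixed point iteration satisfies
`(‖λᵏ‖^{1−1/p} − ‖λ*‖^{1−1/p})(‖λᵏ⁺¹‖² − ‖λ*‖²) ≥ 0`. -/
theorem fixed_point_iteration_norm_sq_monotone
    (n : ℕ) (g : EuclideanSpace ℝ (Fin n) → ℝ)
    (hg : ConvexOn ℝ Set.univ g) (μ p : ℝ) (hμ : 0 < μ) (hp : 1 ≤ p)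
    (lamstar : EuclideanSpace ℝ (Fin n)) (hstar0 : lamstar ≠ 0)
    (hstar : ∀ z : EuclideanSpace ℝ (Fin n),
      g lamstar + μ / (1 + 1 / p) * ‖lamstar‖ ^ (1 + 1 / p) ≤
        g z + μ / (1 + 1 / p) * ‖z‖ ^ (1 + 1 / p))
    (lamk lamk1 : EuclideanSpace ℝ (Fin n)) (hk : lamk ≠ 0)
    (hmin : ∀ z : EuclideanSpace ℝ (Fin n),
      g lamk1 + μ / 2 * ‖lamk‖ ^ (1 / p - 1) * ‖lamk1‖ ^ 2 ≤
        g z + μ / 2 * ‖lamk‖ ^ (1 / p - 1) * ‖z‖ ^ 2) :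
    (‖lamk‖ ^ (1 - 1 / p) - ‖lamstar‖ ^ (1 - 1 / p)) * (‖lamk1‖ ^ 2 - ‖lamstar‖ ^ 2) ≥ 0 :=
  fixed_point_iteration_norm_sq_monotone_general n g μ p hμ hp lamstar hstar0 hstar lamk lamk1 hk
    hmin
end

section
/- Let g : ℝⁿ → ℝ be convex, μ > 0, p ≥ 1. Suppose λ* ≠ 0 is a global minimizer of φ(λ) = g(λ) + (μ/(1+1/p))·‖λ‖^{1+1/p}, let λᵏ ∈ ℝⁿ with λᵏ ≠ 0, and let λᵏ⁺¹ be a global minimizer of λ ↦ g(λ) + (μ/2)·‖λᵏ‖^{(1/p)−1}·‖λ‖². Then (‖λᵏ‖^{1−1/p} − ‖λ*‖^{1−1/p})·(‖λᵏ‖^{1−1/p} − ‖λᵏ⁺¹‖^{1−1/p}) ≥ 0. -/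
/-!
The minimizer `λᵏ⁺¹` of the convex function `g + κ‖·‖²`, `κ = (μ/2)‖λᵏ‖^(1/p-1)`, satisfies the
variational inequality `g λᵏ⁺¹ ≤ g z + 2κ⟪λᵏ⁺¹, z - λᵏ⁺¹⟫`. Testing it at `z = λ*`, adding the
optimality of `λ*` tested at `λᵏ⁺¹`, and using Cauchy–Schwarz and the tangent-line inequality of
`x ↦ x^(1+1/p)` at `b = ‖λᵏ⁺¹‖` gives `(b - ‖λ*‖) (‖λᵏ‖^(1-1/p) - b^(1-1/p)) ≥ 0`. Hence
`b^(1-1/p)` lies between `‖λ*‖^(1-1/p)` and `‖λᵏ‖^(1-1/p)`.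
-/

open Filter Topology Set

theorem ConvexOn.le_add_two_mul_inner_of_isMinOn_add_sq_norm
    {E : Type*} [NormedAddCommGroup E] [InnerProductSpace ℝ E] {g : E → ℝ}
    (hg : ConvexOn ℝ univ g) {κ : ℝ} {x : E}
    (hx : IsMinOn (fun z => g z + κ * ‖z‖ ^ 2) univ x) (z : E) :
    g x ≤ g z + 2 * κ * inner ℝ x (z - x) := by
  have hsegment : ∀ t ∈ Ioc (0 : ℝ) 1,
      g x ≤ g z + 2 * κ * inner ℝ x (z - x) + t * (κ * ‖z - x‖ ^ 2) := by
    rintro t ⟨ht0, ht1⟩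
    have hmin := isMinOn_univ_iff.1 hx (x + t • (z - x))
    have hconv : g (x + t • (z - x)) ≤ (1 - t) * g x + t * g z := by
      have := hg.2 (mem_univ x) (mem_univ z) (by linarith : (0 : ℝ) ≤ 1 - t) ht0.le (by ring)
      rwa [show (1 - t) • x + t • z = x + t • (z - x) by module, smul_eq_mul, smul_eq_mul] at this
    have hnorm : ‖x + t • (z - x)‖ ^ 2
        = ‖x‖ ^ 2 + t * (2 * inner ℝ x (z - x)) + t ^ 2 * ‖z - x‖ ^ 2 := by
      rw [norm_add_sq_real, real_inner_smul_right, norm_smul, Real.norm_eq_abs, abs_of_pos ht0]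
      ring
    simp only [hnorm] at hmin
    refine le_of_mul_le_mul_left ?_ ht0
    linarith
  have hlim : Tendsto (fun t : ℝ => g z + 2 * κ * inner ℝ x (z - x) + t * (κ * ‖z - x‖ ^ 2))
      (𝓝[>] 0) (𝓝 (g z + 2 * κ * inner ℝ x (z - x))) := by
    apply tendsto_nhdsWithin_of_tendsto_nhds
    exact (by fun_prop : Continuous fun t : ℝ => g z + 2 * κ * inner ℝ x (z - x)
      + t * (κ * ‖z - x‖ ^ 2)).tendsto' 0 _ (by simp)
  exact ge_of_tendsto hlim (eventually_of_mem (Ioc_mem_nhdsGT one_pos) hsegment)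

theorem ConvexOn.le_add_two_mul_norm_mul_sub_of_isMinOn_add_sq_norm
    {E : Type*} [NormedAddCommGroup E] [InnerProductSpace ℝ E] {g : E → ℝ}
    (hg : ConvexOn ℝ univ g) {κ : ℝ} (hκ : 0 ≤ κ) {x : E}
    (hx : IsMinOn (fun z => g z + κ * ‖z‖ ^ 2) univ x) (z : E) :
    g x ≤ g z + 2 * κ * (‖x‖ * ‖z‖ - ‖x‖ ^ 2) := by
  have hcs : inner ℝ x (z - x) ≤ ‖x‖ * ‖z‖ - ‖x‖ ^ 2 := by
    rw [inner_sub_right, real_inner_self_eq_norm_sq]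
    linarith [real_inner_le_norm x z]
  linarith [hg.le_add_two_mul_inner_of_isMinOn_add_sq_norm hx z,
    mul_le_mul_of_nonneg_left hcs (by positivity : 0 ≤ 2 * κ)]

theorem Real.rpow_sub_rpow_le_mul_rpow_sub_one_mul {r b s : ℝ} (hr : 1 ≤ r) (hb : 0 < b)
    (hs : 0 ≤ s) : b ^ r - s ^ r ≤ r * b ^ (r - 1) * (b - s) := by
  obtain ⟨u, hu, rfl⟩ : ∃ u, 0 ≤ u ∧ s = b * u := ⟨s / b, by positivity, by field_simp⟩
  have bernoulli := one_add_mul_self_le_rpow_one_add (by linarith : -1 ≤ u - 1) hr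
  rw [add_sub_cancel] at bernoulli
  have hbr : b ^ (r - 1) * b = b ^ r := by
    rw [← Real.rpow_add_one hb.ne', sub_add_cancel]
  rw [Real.mul_rpow hb.le hu]
  have key := mul_le_mul_of_nonneg_left bernoulli (Real.rpow_pos_of_pos hb r).le
  linear_combination key - r * (1 - u) * hbr

theorem sub_mul_sub_nonneg_of_monotoneOn {f : ℝ → ℝ} {S : Set ℝ} (hf : MonotoneOn f S)
    {a b c : ℝ} (hb : b ∈ S) (hc : c ∈ S) (h : 0 ≤ (b - c) * (f a - f b)) :
    0 ≤ (f a - f c) * (f a - f b) := by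
  rcases lt_trichotomy (f a) (f b) with hab | hab | hab
  · have hbc : f b ≤ f c := hf hb hc (by nlinarith)
    nlinarith
  · simp [hab]
  · have hcb : f c ≤ f b := hf hc hb (by nlinarith)
    nlinarith

theorem sub_mul_rpow_sub_rpow_nonneg {q a b s : ℝ} (ha : 0 < a) (hb : 0 < b)
    (h : a ^ (q - 1) * b * (b - s) ≤ b ^ q * (b - s)) :
    0 ≤ (b - s) * (a ^ (1 - q) - b ^ (1 - q)) := by
  have hfactor : b ^ q * (b - s) - a ^ (q - 1) * b * (b - s)
      = a ^ (q - 1) * b ^ q * ((b - s) * (a ^ (1 - q) - b ^ (1 - q))) := by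
    have hA : a ^ (q - 1) * a ^ (1 - q) = 1 := by
      rw [← Real.rpow_add ha]; simp
    have hB : b ^ q * b ^ (1 - q) = b := by
      rw [← Real.rpow_add hb]; simp
    linear_combination -(b ^ q * (b - s)) * hA + a ^ (q - 1) * (b - s) * hB
  have hpos : 0 < a ^ (q - 1) * b ^ q := by positivity
  exact nonneg_of_mul_nonneg_right (by linarith) hpos

/-- One step of the fixed point iteration satisfies
`(‖λᵏ‖^{1−1/p} − ‖λ*‖^{1−1/p})(‖λᵏ‖^{1−1/p} − ‖λᵏ⁺¹‖^{1−1/p}) ≥ 0`. -/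
theorem fixed_point_iteration_pow_monotone
    (n : ℕ) (g : EuclideanSpace ℝ (Fin n) → ℝ)
    (hg : ConvexOn ℝ Set.univ g) (μ p : ℝ) (hμ : 0 < μ) (hp : 1 ≤ p)
    (lamstar : EuclideanSpace ℝ (Fin n)) (hstar0 : lamstar ≠ 0)
    (hstar : ∀ z : EuclideanSpace ℝ (Fin n),
      g lamstar + μ / (1 + 1 / p) * ‖lamstar‖ ^ (1 + 1 / p) ≤
        g z + μ / (1 + 1 / p) * ‖z‖ ^ (1 + 1 / p))
    (lamk lamk1 : EuclideanSpace ℝ (Fin n)) (hk : lamk ≠ 0)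
    (hmin : ∀ z : EuclideanSpace ℝ (Fin n),
      g lamk1 + μ / 2 * ‖lamk‖ ^ (1 / p - 1) * ‖lamk1‖ ^ 2 ≤
        g z + μ / 2 * ‖lamk‖ ^ (1 / p - 1) * ‖z‖ ^ 2) :
    (‖lamk‖ ^ (1 - 1 / p) - ‖lamstar‖ ^ (1 - 1 / p)) *
      (‖lamk‖ ^ (1 - 1 / p) - ‖lamk1‖ ^ (1 - 1 / p)) ≥ 0 := by
  have hq : 0 < 1 / p := by positivity
  have hq1 : 1 / p ≤ 1 := div_le_one_of_le₀ hp (by positivity)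
  have ha : 0 < ‖lamk‖ := norm_pos_iff.2 hk
  have hs : 0 < ‖lamstar‖ := norm_pos_iff.2 hstar0
  have hfirst := hg.le_add_two_mul_norm_mul_sub_of_isMinOn_add_sq_norm
    (κ := μ / 2 * ‖lamk‖ ^ (1 / p - 1)) (by positivity) (isMinOn_univ_iff.2 hmin) lamstar
  have hsecond : g lamstar - g lamk1 ≤
      μ / (1 + 1 / p) * (‖lamk1‖ ^ (1 + 1 / p) - ‖lamstar‖ ^ (1 + 1 / p)) := by
    linarith [hstar lamk1]
  have hb : 0 < ‖lamk1‖ := by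
    refine (norm_nonneg lamk1).lt_of_ne fun h0 => ?_
    rw [← h0, Real.zero_rpow (by positivity)] at hsecond
    rw [← h0] at hfirst
    have : 0 < μ / (1 + 1 / p) * ‖lamstar‖ ^ (1 + 1 / p) := by positivity
    linarith
  have htangent := mul_le_mul_of_nonneg_left
    (Real.rpow_sub_rpow_le_mul_rpow_sub_one_mul (by linarith : 1 ≤ 1 + 1 / p) hb hs.le)
    (by positivity : 0 ≤ μ / (1 + 1 / p))
  rw [add_sub_cancel_left, ← mul_assoc, ← mul_assoc, div_mul_cancel₀ _ (by positivity)] at htangent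
  have hsign : ‖lamk‖ ^ (1 / p - 1) * ‖lamk1‖ * (‖lamk1‖ - ‖lamstar‖) ≤
      ‖lamk1‖ ^ (1 / p) * (‖lamk1‖ - ‖lamstar‖) := by
    refine le_of_mul_le_mul_left ?_ hμ
    linear_combination hfirst + hsecond + htangent
  exact sub_mul_sub_nonneg_of_monotoneOn
    (Real.monotoneOn_rpow_Ici_of_exponent_nonneg (by linarith : 0 ≤ 1 - 1 / p))
    (mem_Ici.2 hb.le) (mem_Ici.2 hs.le) (sub_mul_rpow_sub_rpow_nonneg ha hb hsign)
end

section
/- Let g : ℝⁿ → ℝ be convex, μ > 0, p ≥ 1. Suppose λ* ≠ 0 is a global minimizer of φ(λ) = g(λ) + (μ/(1+1/p))·‖λ‖^{1+1/p}, let λᵏ ∈ ℝⁿ with λᵏ ≠ 0, and let λᵏ⁺¹ be a global minimizer of λ ↦ g(λ) + (μ/2)·‖λᵏ‖^{(1/p)−1}·‖λ‖². Then λᵏ⁺¹ ≠ 0. -/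
/-- If `λ* ≠ 0` minimizes `g(λ) + (μ/(1+1/p))‖λ‖^{1+1/p}` and `λᵏ ≠ 0`, then the next
iterate `λᵏ⁺¹` of the fixed point iteration is nonzero. -/
theorem fixed_point_iteration_next_ne_zero
    (n : ℕ) (g : EuclideanSpace ℝ (Fin n) → ℝ)
    (hg : ConvexOn ℝ Set.univ g) (μ p : ℝ) (hμ : 0 < μ) (hp : 1 ≤ p)
    (lamstar : EuclideanSpace ℝ (Fin n)) (hstar0 : lamstar ≠ 0)
    (hstar : ∀ z : EuclideanSpace ℝ (Fin n),
      g lamstar + μ / (1 + 1 / p) * ‖lamstar‖ ^ (1 + 1 / p) ≤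
        g z + μ / (1 + 1 / p) * ‖z‖ ^ (1 + 1 / p))
    (lamk lamk1 : EuclideanSpace ℝ (Fin n)) (hk : lamk ≠ 0)
    (hmin : ∀ z : EuclideanSpace ℝ (Fin n),
      g lamk1 + μ / 2 * ‖lamk‖ ^ (1 / p - 1) * ‖lamk1‖ ^ 2 ≤
        g z + μ / 2 * ‖lamk‖ ^ (1 / p - 1) * ‖z‖ ^ 2) :
    lamk1 ≠ 0 := by
  intro h0
  subst h0
  have hp0 : (0 : ℝ) < p := lt_of_lt_of_le one_pos hp
  have hq0 : (0 : ℝ) < 1 + 1 / p := by positivity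
  have hns : 0 < ‖lamstar‖ := norm_pos_iff.mpr hstar0
  set c := μ / 2 * ‖lamk‖ ^ (1 / p - 1) with hcdef
  have hc0 : 0 ≤ c := by
    have : (0:ℝ) ≤ ‖lamk‖ ^ (1 / p - 1) := Real.rpow_nonneg (norm_nonneg _) _
    positivity
  -- key step: g 0 ≤ g lamstar
  have hstep : ∀ t : ℝ, 0 < t → t ≤ 1 →
      g 0 - g lamstar ≤ c * t * ‖lamstar‖ ^ 2 := by
    intro t ht0 ht1
    have hconv := hg.2 (Set.mem_univ (0 : EuclideanSpace ℝ (Fin n)))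
      (Set.mem_univ lamstar) (by linarith : (0:ℝ) ≤ 1 - t) ht0.le (by ring)
    have hsm : (1 - t) • (0 : EuclideanSpace ℝ (Fin n)) + t • lamstar = t • lamstar := by
      simp
    rw [hsm] at hconv
    have hm := hmin (t • lamstar)
    simp only [norm_zero, ne_eq, OfNat.ofNat_ne_zero, not_false_eq_true, zero_pow,
      mul_zero, add_zero] at hm
    have hn : ‖t • lamstar‖ ^ 2 = t ^ 2 * ‖lamstar‖ ^ 2 := by
      rw [norm_smul, Real.norm_eq_abs, mul_pow, sq_abs]
    rw [hn] at hm
    simp only [smul_eq_mul] at hconv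
    have h4 : t * (g 0 - g lamstar) ≤ t * (c * t * ‖lamstar‖ ^ 2) := by nlinarith [hm, hconv]
    exact le_of_mul_le_mul_left h4 ht0
  have key : g 0 ≤ g lamstar := by
    by_contra hlt
    push_neg at hlt
    set d := g 0 - g lamstar with hd
    have hd0 : 0 < d := by simp [hd]; linarith
    set M := c * ‖lamstar‖ ^ 2 with hM
    have hM0 : 0 ≤ M := by positivity
    set t := min 1 (d / (2 * (M + 1))) with ht
    have ht0 : 0 < t := by
      apply lt_min one_pos
      positivity
    have ht1 : t ≤ 1 := min_le_left _ _
    have ht2 : t ≤ d / (2 * (M + 1)) := min_le_right _ _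
    have h := hstep t ht0 ht1
    have hMt : c * t * ‖lamstar‖ ^ 2 = t * M := by rw [hM]; ring
    rw [hMt] at h
    have h2 : t * M ≤ d / (2 * (M + 1)) * M := mul_le_mul_of_nonneg_right ht2 hM0
    have h3 : d / (2 * (M + 1)) * M < d := by
      rw [div_mul_eq_mul_div, div_lt_iff₀ (by positivity)]
      nlinarith
    linarith
  have h1 := hstar 0
  rw [norm_zero, Real.zero_rpow (ne_of_gt hq0)] at h1
  have hε : 0 < μ / (1 + 1 / p) * ‖lamstar‖ ^ (1 + 1 / p) := by
    have := Real.rpow_pos_of_pos hns (1 + 1 / p)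
    positivity
  linarith
end

section
/- Let g : ℝⁿ → ℝ be convex, μ > 0, p ≥ 1. Suppose λ* ≠ 0 is a global minimizer of φ(λ) = g(λ) + (μ/(1+1/p))·‖λ‖^{1+1/p}, let λᵏ ∈ ℝⁿ with ‖λᵏ‖ ≥ ‖λ*‖ and λᵏ⁺¹ ≠ λ*, and let λᵏ⁺¹ be a global minimizer of λ ↦ g(λ) + (μ/2)·‖λᵏ‖^{(1/p)−1}·‖λ‖². Then ‖λᵏ⁺¹‖ ≤ ‖λᵏ‖^{1−1/p}·‖λ*‖^{1/p}. -/
/-!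
Write `b = ‖λ*‖` and `s = 1/p`. By weighted AM-GM the quadratic `(μ/2) b^(s-1) r²` majorizes
`μ/(1+s) r^(1+s)` up to a constant, with equality at `r = b`, so `λ*` also minimizes
`g + (μ/2) b^(s-1) ‖·‖²`. Thus `λᵏ⁺¹` and `λ*` minimize `g` plus quadratics of weights
`γ₁ = (μ/2) ‖λᵏ‖^(s-1)` and `γ₂ = (μ/2) b^(s-1)`. The first-order conditions `-2γ₁ λᵏ⁺¹ ∈ ∂g(λᵏ⁺¹)`,
`-2γ₂ λ* ∈ ∂g(λ*)` and monotonicity of `∂g` give `(‖λᵏ⁺¹‖ - b)(γ₁ ‖λᵏ⁺¹‖ - γ₂ b) ≤ 0`, and the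
bound follows by comparing `‖λᵏ⁺¹‖` with `b`.
-/

open Set Filter Topology
open scoped RealInnerProductSpace

theorem ConvexOn.le_add_of_isMinOn_add_of_hasLineDerivAt {E : Type*} [AddCommGroup E]
    [Module ℝ E] {s : Set E} {g h : E → ℝ} {x z : E} {h' : ℝ} (hg : ConvexOn ℝ s g)
    (hmin : IsMinOn (fun y => g y + h y) s x) (hx : x ∈ s) (hz : z ∈ s)
    (hh : HasLineDerivAt ℝ h h' x (z - x)) :
    g x ≤ g z + h' := by
  have hslope : ∀ t ∈ Ioc (0 : ℝ) 1, g x - g z ≤ t⁻¹ • (h (x + t • (z - x)) - h x) := by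
    rintro t ⟨ht₀, ht₁⟩
    have hseg : x + t • (z - x) = (1 - t) • x + t • z := by module
    have hconv := hg.2 hx hz (sub_nonneg.2 ht₁) ht₀.le (sub_add_cancel 1 t)
    have hle : g x + h x ≤ g ((1 - t) • x + t • z) + h ((1 - t) • x + t • z) :=
      hmin (hg.1 hx hz (sub_nonneg.2 ht₁) ht₀.le (sub_add_cancel 1 t))
    rw [← hseg] at hconv hle
    rw [smul_eq_mul, le_inv_mul_iff₀ ht₀]
    simp only [smul_eq_mul] at hconv
    linear_combination hle + hconv
  have := ge_of_tendsto hh.tendsto_slope_zero_right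
    (eventually_of_mem (Ioc_mem_nhdsGT one_pos) hslope)
  linarith

section InnerProductSpace

variable {E : Type*} [NormedAddCommGroup E] [InnerProductSpace ℝ E] {s : Set E} {g : E → ℝ}

theorem ConvexOn.le_add_inner_of_isMinOn_add_sq {γ : ℝ} {x z : E} (hg : ConvexOn ℝ s g)
    (hmin : IsMinOn (fun y => g y + γ * ‖y‖ ^ 2) s x) (hx : x ∈ s) (hz : z ∈ s) :
    g x ≤ g z + 2 * γ * ⟪x, z - x⟫ := by
  have hderiv := (((hasStrictFDerivAt_norm_sq x).hasFDerivAt.const_mul γ).hasLineDerivAt (z - x))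
  refine hg.le_add_of_isMinOn_add_of_hasLineDerivAt hmin hx hz ?_
  convert hderiv using 1
  simp only [smul_apply, coe_innerSL_apply, nsmul_eq_mul, Nat.cast_ofNat, smul_eq_mul]
  ring

theorem ConvexOn.norm_sub_mul_sub_nonpos_of_isMinOn {γ₁ γ₂ : ℝ} {x₁ x₂ : E}
    (hg : ConvexOn ℝ s g) (h₁ : IsMinOn (fun y => g y + γ₁ * ‖y‖ ^ 2) s x₁)
    (h₂ : IsMinOn (fun y => g y + γ₂ * ‖y‖ ^ 2) s x₂) (hx₁ : x₁ ∈ s) (hx₂ : x₂ ∈ s)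
    (hγ₁ : 0 ≤ γ₁) (hγ₂ : 0 ≤ γ₂) :
    (‖x₁‖ - ‖x₂‖) * (γ₁ * ‖x₁‖ - γ₂ * ‖x₂‖) ≤ 0 := by
  have hA := hg.le_add_inner_of_isMinOn_add_sq h₁ hx₁ hx₂
  have hB := hg.le_add_inner_of_isMinOn_add_sq h₂ hx₂ hx₁
  rw [inner_sub_right, real_inner_self_eq_norm_sq] at hA
  rw [inner_sub_right, real_inner_self_eq_norm_sq, real_inner_comm] at hB
  have hcs : ⟪x₁, x₂⟫ ≤ ‖x₁‖ * ‖x₂‖ := real_inner_le_norm x₁ x₂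
  nlinarith

end InnerProductSpace

namespace Real

theorem rpow_mul_rpow_two_sub_le {q r b : ℝ} (hq₀ : 0 ≤ q) (hq₂ : q ≤ 2) (hr : 0 ≤ r)
    (hb : 0 ≤ b) : r ^ q * b ^ (2 - q) ≤ q / 2 * r ^ 2 + (2 - q) / 2 * b ^ 2 := by
  have hsq : ∀ {y : ℝ} (e : ℝ), 0 ≤ y → (y ^ 2) ^ (e / 2) = y ^ e := fun e hy => by
    rw [← rpow_natCast, ← rpow_mul hy, Nat.cast_ofNat, mul_div_cancel₀ e two_ne_zero]
  have h := geom_mean_le_arith_mean2_weighted (by linarith : 0 ≤ q / 2)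
    (by linarith : 0 ≤ (2 - q) / 2) (sq_nonneg r) (sq_nonneg b) (by ring)
  rwa [hsq q hr, hsq _ hb] at h

theorem isMinOn_mul_sq_sub_rpow {c σ b : ℝ} (hc : 0 ≤ c) (hσ₀ : -1 < σ) (hσ₁ : σ ≤ 1)
    (hb : 0 < b) :
    IsMinOn (fun r => c / 2 * b ^ (σ - 1) * r ^ 2 - c / (1 + σ) * r ^ (1 + σ)) (Ici 0) b := by
  refine isMinOn_iff.2 fun r (hr : 0 ≤ r) => ?_
  have hσ : 0 < 1 + σ := by linarith
  have h := rpow_mul_rpow_two_sub_le (by linarith) (by linarith : 1 + σ ≤ 2) hr hb.le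
  have e₁ : b ^ (2 - (1 + σ)) * b ^ (σ - 1) = 1 := by
    rw [← rpow_add hb, show 2 - (1 + σ) + (σ - 1) = 0 by ring, rpow_zero]
  have e₂ : b ^ (σ - 1) * b ^ 2 = b ^ (1 + σ) := by
    rw [← rpow_natCast, ← rpow_add hb, Nat.cast_ofNat, show σ - 1 + 2 = 1 + σ by ring]
  have hweight : 0 ≤ c / (1 + σ) * b ^ (σ - 1) := by positivity
  have hscaled := mul_le_mul_of_nonneg_left h hweight
  have eL : c / (1 + σ) * b ^ (σ - 1) * (r ^ (1 + σ) * b ^ (2 - (1 + σ)))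
      = c / (1 + σ) * r ^ (1 + σ) := by
    linear_combination (c / (1 + σ) * r ^ (1 + σ)) * e₁
  have eR : c / (1 + σ) * b ^ (σ - 1) * ((1 + σ) / 2 * r ^ 2 + (2 - (1 + σ)) / 2 * b ^ 2)
      = c / 2 * b ^ (σ - 1) * r ^ 2 + c / (1 + σ) * b ^ (1 + σ) - c / 2 * b ^ (σ - 1) * b ^ 2 := by
    rw [← e₂]
    field_simp
    ring
  linarith

theorem le_rpow_mul_rpow_of_sub_mul_sub_nonpos {a b t c σ : ℝ} (hc : 0 < c) (hb : 0 < b)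
    (hbt : b ≤ t) (hσ : σ ≤ 1)
    (h : (a - b) * (c * t ^ (σ - 1) * a - c * b ^ (σ - 1) * b) ≤ 0) :
    a ≤ t ^ (1 - σ) * b ^ σ := by
  have ht : 0 < t := hb.trans_le hbt
  rcases le_or_gt a b with hab | hab
  · calc a ≤ b := hab
      _ = b ^ (1 - σ) * b ^ σ := by rw [← rpow_add hb, sub_add_cancel, rpow_one]
      _ ≤ t ^ (1 - σ) * b ^ σ := by gcongr
  · have hbσ : b ^ (σ - 1) * b = b ^ σ := by rw [← rpow_add_one hb.ne', sub_add_cancel]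
    have hcmp : c * (t ^ (σ - 1) * a) ≤ c * b ^ σ := by
      linear_combination nonpos_of_mul_nonpos_right h (sub_pos.2 hab) + c * hbσ
    calc a = t ^ (1 - σ) * (t ^ (σ - 1) * a) := by
          rw [← mul_assoc, ← rpow_add ht, sub_add_sub_cancel', sub_self, rpow_zero, one_mul]
      _ ≤ t ^ (1 - σ) * b ^ σ := by gcongr; exact le_of_mul_le_mul_left hcmp hc

end Real

theorem IsMinOn.add_mul_sq_of_add_rpow {E : Type*} [NormedAddCommGroup E] {s : Set E}
    {g : E → ℝ} {c σ : ℝ} {x : E} (hc : 0 ≤ c) (hσ₀ : -1 < σ) (hσ₁ : σ ≤ 1) (hx : x ≠ 0)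
    (hmin : IsMinOn (fun y => g y + c / (1 + σ) * ‖y‖ ^ (1 + σ)) s x) :
    IsMinOn (fun y => g y + c / 2 * ‖x‖ ^ (σ - 1) * ‖y‖ ^ 2) s x := by
  refine isMinOn_iff.2 fun y hy => ?_
  have hψ := isMinOn_iff.1 (Real.isMinOn_mul_sq_sub_rpow hc hσ₀ hσ₁ (norm_pos_iff.2 hx)) ‖y‖
    (norm_nonneg y)
  have := isMinOn_iff.1 hmin y hy
  linarith

theorem fixed_point_iteration_contraction_above_general
    (n : ℕ) (g : EuclideanSpace ℝ (Fin n) → ℝ)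
    (hg : ConvexOn ℝ Set.univ g) (μ p : ℝ) (hμ : 0 < μ) (hp : 1 ≤ p)
    (lamstar : EuclideanSpace ℝ (Fin n)) (hstar0 : lamstar ≠ 0)
    (hstar : ∀ z : EuclideanSpace ℝ (Fin n),
      g lamstar + μ / (1 + 1 / p) * ‖lamstar‖ ^ (1 + 1 / p) ≤
        g z + μ / (1 + 1 / p) * ‖z‖ ^ (1 + 1 / p))
    (lamk lamk1 : EuclideanSpace ℝ (Fin n))
    (hk : ‖lamstar‖ ≤ ‖lamk‖)
    (hmin : ∀ z : EuclideanSpace ℝ (Fin n),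
      g lamk1 + μ / 2 * ‖lamk‖ ^ (1 / p - 1) * ‖lamk1‖ ^ 2 ≤
        g z + μ / 2 * ‖lamk‖ ^ (1 / p - 1) * ‖z‖ ^ 2) :
    ‖lamk1‖ ≤ ‖lamk‖ ^ (1 - 1 / p) * ‖lamstar‖ ^ (1 / p) := by
  have hs₀ : 0 < 1 / p := by positivity
  have hs₁ : 1 / p ≤ 1 := (div_le_one (by linarith)).2 hp
  have hstarq := IsMinOn.add_mul_sq_of_add_rpow hμ.le (by linarith) hs₁ hstar0
    (isMinOn_univ_iff.2 hstar)
  have key := hg.norm_sub_mul_sub_nonpos_of_isMinOn (isMinOn_univ_iff.2 hmin) hstarq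
    (mem_univ _) (mem_univ _) (by positivity) (by positivity)
  exact Real.le_rpow_mul_rpow_of_sub_mul_sub_nonpos (half_pos hμ) (norm_pos_iff.2 hstar0) hk hs₁ key

/-- If `‖λᵏ‖ ≥ ‖λ*‖` and `λᵏ⁺¹ ≠ λ*`, one step of the fixed point iteration satisfies
`‖λᵏ⁺¹‖ ≤ ‖λᵏ‖^{1−1/p}‖λ*‖^{1/p}`. -/
theorem fixed_point_iteration_contraction_above
    (n : ℕ) (g : EuclideanSpace ℝ (Fin n) → ℝ)
    (hg : ConvexOn ℝ Set.univ g) (μ p : ℝ) (hμ : 0 < μ) (hp : 1 ≤ p)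
    (lamstar : EuclideanSpace ℝ (Fin n)) (hstar0 : lamstar ≠ 0)
    (hstar : ∀ z : EuclideanSpace ℝ (Fin n),
      g lamstar + μ / (1 + 1 / p) * ‖lamstar‖ ^ (1 + 1 / p) ≤
        g z + μ / (1 + 1 / p) * ‖z‖ ^ (1 + 1 / p))
    (lamk lamk1 : EuclideanSpace ℝ (Fin n))
    (hk : ‖lamstar‖ ≤ ‖lamk‖) (hne : lamk1 ≠ lamstar)
    (hmin : ∀ z : EuclideanSpace ℝ (Fin n),
      g lamk1 + μ / 2 * ‖lamk‖ ^ (1 / p - 1) * ‖lamk1‖ ^ 2 ≤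
        g z + μ / 2 * ‖lamk‖ ^ (1 / p - 1) * ‖z‖ ^ 2) :
    ‖lamk1‖ ≤ ‖lamk‖ ^ (1 - 1 / p) * ‖lamstar‖ ^ (1 / p) :=
  fixed_point_iteration_contraction_above_general n g hg μ p hμ hp lamstar hstar0 hstar lamk lamk1
    hk hmin
end

section
/- Let g : ℝⁿ → ℝ be convex, μ > 0, p ≥ 1. Suppose λ* ≠ 0 is a global minimizer of φ(λ) = g(λ) + (μ/(1+1/p))·‖λ‖^{1+1/p}, let λᵏ ∈ ℝⁿ with 0 < ‖λᵏ‖ ≤ ‖λ*‖ and λᵏ⁺¹ ≠ λ*, and let λᵏ⁺¹ be a global minimizer of λ ↦ g(λ) + (μ/2)·‖λᵏ‖^{(1/p)−1}·‖λ‖². Then ‖λᵏ‖^{1−1/p}·‖λ*‖^{1/p} ≤ ‖λᵏ⁺¹‖. -/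
/-!
Both `λᵏ⁺¹` and `λ*` minimise `g` plus a penalty depending only on the norm. Moving each of them
a fraction `t` towards the other does not increase the sum of the two values of `g`, by convexity,
so the sum of the two penalty increments along the segments of norms is nonnegative.
Differentiating at `t = 0` gives `μ ‖λ*‖^{1/p} ≤ μ ‖λᵏ‖^{1/p-1} ‖λᵏ⁺¹‖` when `‖λᵏ⁺¹‖ < ‖λ*‖`;
otherwise `‖λᵏ‖ ≤ ‖λ*‖ ≤ ‖λᵏ⁺¹‖` already gives the bound.
-/

open Set

theorem IsMinOn.hasDerivAt_nonneg_of_left_endpoint {f : ℝ → ℝ} {a b L : ℝ} (hab : a < b)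
    (hmin : IsMinOn f (Icc a b) a) (hf : HasDerivAt f L a) : 0 ≤ L := by
  have hcone : (1 : ℝ) ∈ posTangentConeAt (Icc a b) a := by
    rw [one_mem_posTangentConeAt_iff_frequently]
    exact (Filter.Eventually.frequently (Ioo_mem_nhdsGT hab)).mono
      fun _ hx => Ioo_subset_Icc_self hx
  simpa using hmin.localize.hasFDerivWithinAt_nonneg hf.hasFDerivAt.hasFDerivWithinAt hcone

section

variable {E : Type*} [NormedAddCommGroup E] [NormedSpace ℝ E] {g : E → ℝ} {φ ψ : ℝ → ℝ}
  {u v : E}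

theorem penalty_increments_nonneg_of_isMinOn (hg : ConvexOn ℝ univ g) (hφ : MonotoneOn φ (Ici 0))
    (hψ : MonotoneOn ψ (Ici 0)) (hu : IsMinOn (fun z => g z + φ ‖z‖) univ u)
    (hv : IsMinOn (fun z => g z + ψ ‖z‖) univ v) {t : ℝ} (ht : t ∈ Icc (0 : ℝ) 1) :
    0 ≤ φ (‖u‖ + t * (‖v‖ - ‖u‖)) - φ ‖u‖ + (ψ (‖v‖ + t * (‖u‖ - ‖v‖)) - ψ ‖v‖) := by
  obtain ⟨ht0, ht1⟩ := ht
  have hmid : ∀ x y : E, g ((1 - t) • x + t • y) ≤ (1 - t) * g x + t * g y ∧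
      ‖(1 - t) • x + t • y‖ ≤ ‖x‖ + t * (‖y‖ - ‖x‖) := fun x y => by
    refine ⟨hg.2 (mem_univ x) (mem_univ y) (sub_nonneg.2 ht1) ht0 (sub_add_cancel 1 t), ?_⟩
    have := (convexOn_norm convex_univ).2 (mem_univ x) (mem_univ y) (sub_nonneg.2 ht1) ht0
      (sub_add_cancel 1 t)
    simp only [smul_eq_mul] at this
    linarith
  obtain ⟨hgx, hnx⟩ := hmid u v
  obtain ⟨hgy, hny⟩ := hmid v u
  have hφx := hφ (norm_nonneg _) ((norm_nonneg _).trans hnx) hnx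
  have hψy := hψ (norm_nonneg _) ((norm_nonneg _).trans hny) hny
  have hux := isMinOn_univ_iff.1 hu ((1 - t) • u + t • v)
  have hvy := isMinOn_univ_iff.1 hv ((1 - t) • v + t • u)
  linarith

theorem hasDerivAt_le_of_isMinOn_add_norm (hg : ConvexOn ℝ univ g) (hφ : MonotoneOn φ (Ici 0))
    (hψ : MonotoneOn ψ (Ici 0)) (hu : IsMinOn (fun z => g z + φ ‖z‖) univ u)
    (hv : IsMinOn (fun z => g z + ψ ‖z‖) univ v) {φ' ψ' : ℝ} (hφ' : HasDerivAt φ φ' ‖u‖)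
    (hψ' : HasDerivAt ψ ψ' ‖v‖) (huv : ‖u‖ < ‖v‖) : ψ' ≤ φ' := by
  set f : ℝ → ℝ := fun t =>
    φ (‖u‖ + t * (‖v‖ - ‖u‖)) - φ ‖u‖ + (ψ (‖v‖ + t * (‖u‖ - ‖v‖)) - ψ ‖v‖)
  have hmin : IsMinOn f (Icc 0 1) 0 := fun t ht => by
    simpa [f] using penalty_increments_nonneg_of_isMinOn hg hφ hψ hu hv ht
  have hline : ∀ c d : ℝ, HasDerivAt (fun t : ℝ => c + t * d) d 0 := fun c d => by
    simpa using ((hasDerivAt_id (0 : ℝ)).mul_const d).const_add c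
  have hf : HasDerivAt f ((‖v‖ - ‖u‖) * φ' + (‖u‖ - ‖v‖) * ψ') 0 := by
    have hφ0 : HasDerivAt φ φ' (‖u‖ + 0 * (‖v‖ - ‖u‖)) := by simpa using hφ'
    have hψ0 : HasDerivAt ψ ψ' (‖v‖ + 0 * (‖u‖ - ‖v‖)) := by simpa using hψ'
    exact ((hφ0.scomp 0 (hline _ _)).sub_const _).add ((hψ0.scomp 0 (hline _ _)).sub_const _)
  have := hmin.hasDerivAt_nonneg_of_left_endpoint one_pos hf
  nlinarith

end

theorem fixed_point_iteration_contraction_below_general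
    (n : ℕ) (g : EuclideanSpace ℝ (Fin n) → ℝ)
    (hg : ConvexOn ℝ Set.univ g) (μ p : ℝ) (hμ : 0 < μ) (hp : 1 ≤ p)
    (lamstar : EuclideanSpace ℝ (Fin n))
    (hstar : ∀ z : EuclideanSpace ℝ (Fin n),
      g lamstar + μ / (1 + 1 / p) * ‖lamstar‖ ^ (1 + 1 / p) ≤
        g z + μ / (1 + 1 / p) * ‖z‖ ^ (1 + 1 / p))
    (lamk lamk1 : EuclideanSpace ℝ (Fin n))
    (hk0 : 0 < ‖lamk‖) (hk : ‖lamk‖ ≤ ‖lamstar‖)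
    (hmin : ∀ z : EuclideanSpace ℝ (Fin n),
      g lamk1 + μ / 2 * ‖lamk‖ ^ (1 / p - 1) * ‖lamk1‖ ^ 2 ≤
        g z + μ / 2 * ‖lamk‖ ^ (1 / p - 1) * ‖z‖ ^ 2) :
    ‖lamk‖ ^ (1 - 1 / p) * ‖lamstar‖ ^ (1 / p) ≤ ‖lamk1‖ := by
  have hs : 0 < ‖lamstar‖ := hk0.trans_le hk
  have hp0 : 0 < p := by linarith
  rcases le_or_gt ‖lamstar‖ ‖lamk1‖ with hsb | hbs
  · have : 0 ≤ 1 - 1 / p := sub_nonneg.2 ((div_le_one hp0).2 hp)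
    calc ‖lamk‖ ^ (1 - 1 / p) * ‖lamstar‖ ^ (1 / p)
        ≤ ‖lamstar‖ ^ (1 - 1 / p) * ‖lamstar‖ ^ (1 / p) := by gcongr
      _ = ‖lamstar‖ := by rw [← Real.rpow_add hs]; norm_num
      _ ≤ ‖lamk1‖ := hsb
  · have hq : 0 < 1 + 1 / p := by positivity
    have hslope := hasDerivAt_le_of_isMinOn_add_norm hg
      (φ := fun r => μ / 2 * ‖lamk‖ ^ (1 / p - 1) * r ^ 2)
      (ψ := fun r => μ / (1 + 1 / p) * r ^ (1 + 1 / p))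
      (fun x hx y _ hxy => by dsimp only; gcongr)
      (fun x hx y _ hxy => by dsimp only; gcongr)
      (isMinOn_univ_iff.2 hmin) (isMinOn_univ_iff.2 hstar)
      ((hasDerivAt_pow 2 _).const_mul _)
      ((Real.hasDerivAt_rpow_const (Or.inl hs.ne')).const_mul _) hbs
    have hμs : μ * ‖lamstar‖ ^ (1 / p) ≤ μ * (‖lamk‖ ^ (1 / p - 1) * ‖lamk1‖) := by
      convert hslope using 1 <;> field_simp <;> ring_nf
    calc ‖lamk‖ ^ (1 - 1 / p) * ‖lamstar‖ ^ (1 / p)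
        ≤ ‖lamk‖ ^ (1 - 1 / p) * (‖lamk‖ ^ (1 / p - 1) * ‖lamk1‖) := by
          gcongr; exact le_of_mul_le_mul_left hμs hμ
      _ = ‖lamk1‖ := by rw [← mul_assoc, ← Real.rpow_add hk0]; norm_num

/-- If `0 < ‖λᵏ‖ ≤ ‖λ*‖` and `λᵏ⁺¹ ≠ λ*`, one step of the fixed point iteration satisfies
`‖λᵏ‖^{1−1/p}‖λ*‖^{1/p} ≤ ‖λᵏ⁺¹‖`. -/
theorem fixed_point_iteration_contraction_below
    (n : ℕ) (g : EuclideanSpace ℝ (Fin n) → ℝ)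
    (hg : ConvexOn ℝ Set.univ g) (μ p : ℝ) (hμ : 0 < μ) (hp : 1 ≤ p)
    (lamstar : EuclideanSpace ℝ (Fin n)) (hstar0 : lamstar ≠ 0)
    (hstar : ∀ z : EuclideanSpace ℝ (Fin n),
      g lamstar + μ / (1 + 1 / p) * ‖lamstar‖ ^ (1 + 1 / p) ≤
        g z + μ / (1 + 1 / p) * ‖z‖ ^ (1 + 1 / p))
    (lamk lamk1 : EuclideanSpace ℝ (Fin n))
    (hk0 : 0 < ‖lamk‖) (hk : ‖lamk‖ ≤ ‖lamstar‖) (hne : lamk1 ≠ lamstar)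
    (hmin : ∀ z : EuclideanSpace ℝ (Fin n),
      g lamk1 + μ / 2 * ‖lamk‖ ^ (1 / p - 1) * ‖lamk1‖ ^ 2 ≤
        g z + μ / 2 * ‖lamk‖ ^ (1 / p - 1) * ‖z‖ ^ 2) :
    ‖lamk‖ ^ (1 - 1 / p) * ‖lamstar‖ ^ (1 / p) ≤ ‖lamk1‖ :=
  fixed_point_iteration_contraction_below_general n g hg μ p hμ hp lamstar hstar lamk lamk1 hk0 hk
    hmin
end

section
/- Let g : ℝⁿ → ℝ be convex, μ > 0, p ≥ 1. Suppose λ* ≠ 0 is a global minimizer of φ(λ) = g(λ) + (μ/(1+1/p))·‖λ‖^{1+1/p}. Let λ⁰, λ¹, …, λᴺ be a sequence in ℝⁿ with ‖λ⁰‖ ≥ ‖λ*‖ such that for each 0 ≤ k < N, λᵏ⁺¹ is a global minimizer of λ ↦ g(λ) + (μ/2)·‖λᵏ‖^{(1/p)−1}·‖λ‖², and λᵏ ≠ λ* for k = 1, …, N. Then ln(‖λᵏ‖/‖λ*‖) ≤ (1 − 1/p)ᵏ · ln(‖λ⁰‖/‖λ*‖) for every k = 1, …, N. -/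
/-!
Write `x = λᵏ⁺¹`, `w = λᵏ`, `y = λ*`, `T = ‖w‖^(1/p-1)` and `S = ‖y‖^(1/p-1)`. By convexity of `g`,
the two minimality conditions give the variational inequalities
`g x - g y ≤ μ T ⟪x, y - x⟫` and `g y - g x ≤ μ S ⟪y, x - y⟫`, whose sum is `⟪T x - S y, x - y⟫ ≤ 0`.
By Cauchy–Schwarz, `(T ‖x‖ - S ‖y‖)(‖x‖ - ‖y‖) ≤ 0`, and as long as `‖y‖ ≤ ‖w‖` we have `T ≤ S`,
which forces `‖y‖ ≤ ‖x‖ ≤ ‖y‖^(1/p) ‖w‖^(1-1/p)`. Taking logarithms, `log (‖λᵏ‖/‖λ*‖)` contracts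
by the factor `1 - 1/p` at each step.
-/

open Filter Set
open scoped Topology RealInnerProductSpace

theorem le_and_mul_le_mul_of_mul_sub_mul_nonpos {a b s t : ℝ} (hab : a ≤ b) (hb : 0 < b)
    (ht : 0 ≤ t) (h : (a * t - b * s) * (t - s) ≤ 0) : s ≤ t ∧ a * t ≤ b * s := by
  have hst : s ≤ t := by
    by_contra! hts
    nlinarith [mul_le_mul_of_nonneg_right hab ht, mul_lt_mul_of_pos_left hts hb]
  refine ⟨hst, ?_⟩
  rcases hst.eq_or_lt with rfl | hlt
  · exact mul_le_mul_of_nonneg_right hab ht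
  · nlinarith

theorem log_div_le_of_rpow_mul_le {r s t a : ℝ} (hs : 0 < s) (ht : 0 < t) (ha : 0 < a)
    (h : t ^ (r - 1) * a ≤ s ^ (r - 1) * s) :
    Real.log (a / s) ≤ (1 - r) * Real.log (t / s) := by
  have hlog := Real.log_le_log (by positivity) h
  rw [Real.log_mul (by positivity) ha.ne', Real.log_mul (by positivity) hs.ne',
    Real.log_rpow ht, Real.log_rpow hs] at hlog
  rw [Real.log_div ha.ne' hs.ne', Real.log_div ht.ne' hs.ne']
  linarith

section InnerProductSpace

variable {E : Type*} [NormedAddCommGroup E] [InnerProductSpace ℝ E]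

theorem ConvexOn.sub_le_fderiv_of_forall_add_le {g ψ : E → ℝ} {ψ' : E →L[ℝ] ℝ} {x : E}
    (hg : ConvexOn ℝ univ g) (hψ : HasFDerivAt ψ ψ' x)
    (hmin : ∀ z, g x + ψ x ≤ g z + ψ z) (y : E) :
    g x - g y ≤ ψ' (y - x) := by
  set φ : ℝ → ℝ := fun θ ↦ ψ (x + θ • (y - x))
  have hφ : HasDerivAt φ (ψ' (y - x)) 0 := by
    have hline : HasDerivAt (fun θ : ℝ ↦ x + θ • (y - x)) (y - x) 0 := by
      simpa using ((hasDerivAt_id (0 : ℝ)).smul_const (y - x)).const_add x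
    exact hψ.comp_hasDerivAt_of_eq 0 hline (by simp)
  have hslope : ∀ θ ∈ Ioc (0 : ℝ) 1, g x - g y ≤ slope φ 0 θ := by
    rintro θ ⟨hθ0, hθ1⟩
    have hconv := hg.2 (mem_univ x) (mem_univ y) (sub_nonneg.2 hθ1) hθ0.le (by ring)
    have hpoint : (1 - θ) • x + θ • y = x + θ • (y - x) := by
      rw [smul_sub, sub_smul, one_smul]; abel
    rw [hpoint, smul_eq_mul, smul_eq_mul] at hconv
    have hmin_θ := hmin (x + θ • (y - x))
    rw [slope_def_field, sub_zero, le_div_iff₀ hθ0]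
    simp only [φ, zero_smul, add_zero]
    nlinarith
  have hlim : Tendsto (slope φ 0) (𝓝[>] 0) (𝓝 (ψ' (y - x))) :=
    (hasDerivAt_iff_tendsto_slope.1 hφ).mono_left (nhdsWithin_mono _ fun _ h ↦ ne_of_gt h)
  exact ge_of_tendsto hlim (mem_of_superset (Ioc_mem_nhdsGT zero_lt_one) hslope)

theorem ConvexOn.sub_le_inner_of_forall_add_norm_sq_le {g : E → ℝ} {x : E} {c : ℝ}
    (hg : ConvexOn ℝ univ g) (hmin : ∀ z, g x + c / 2 * ‖x‖ ^ 2 ≤ g z + c / 2 * ‖z‖ ^ 2)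
    (y : E) : g x - g y ≤ c * ⟪x, y - x⟫ := by
  have hψ := ((hasStrictFDerivAt_norm_sq x).hasFDerivAt).const_mul (c / 2)
  convert hg.sub_le_fderiv_of_forall_add_le hψ hmin y using 1
  simp only [smul_apply, coe_innerSL_apply, nsmul_eq_mul, Nat.cast_ofNat,
    smul_eq_mul]
  ring

theorem ConvexOn.sub_le_inner_of_forall_add_norm_rpow_le {g : E → ℝ} {x : E} {c q : ℝ}
    (hq : 1 < q) (hg : ConvexOn ℝ univ g)
    (hmin : ∀ z, g x + c / q * ‖x‖ ^ q ≤ g z + c / q * ‖z‖ ^ q) (y : E) :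
    g x - g y ≤ c * ‖x‖ ^ (q - 2) * ⟪x, y - x⟫ := by
  have hψ := (hasFDerivAt_norm_rpow x hq).const_mul (c / q)
  convert hg.sub_le_fderiv_of_forall_add_le hψ hmin y using 1
  simp only [smul_apply, coe_innerSL_apply, smul_eq_mul]
  field_simp

theorem mul_norm_sub_mul_norm_mul_norm_sub_norm_nonpos {x y : E} {a b : ℝ} (ha : 0 ≤ a)
    (hb : 0 ≤ b) (h : ⟪a • x - b • y, x - y⟫ ≤ 0) :
    (a * ‖x‖ - b * ‖y‖) * (‖x‖ - ‖y‖) ≤ 0 := by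
  have hxy := real_inner_le_norm x y
  simp only [inner_sub_left, inner_sub_right, real_inner_smul_left, real_inner_self_eq_norm_sq,
    real_inner_comm x y] at h
  nlinarith [mul_le_mul_of_nonneg_left hxy (add_nonneg ha hb)]

theorem norm_le_and_log_div_le_of_minimizers {g : E → ℝ} (hg : ConvexOn ℝ univ g)
    {μ p : ℝ} (hμ : 0 < μ) (hp : 1 ≤ p) {y : E} (hy : y ≠ 0)
    (hy_min : ∀ z, g y + μ / (1 + 1 / p) * ‖y‖ ^ (1 + 1 / p) ≤
      g z + μ / (1 + 1 / p) * ‖z‖ ^ (1 + 1 / p))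
    {w x : E} (hw : ‖y‖ ≤ ‖w‖)
    (hx_min : ∀ z, g x + μ / 2 * ‖w‖ ^ (1 / p - 1) * ‖x‖ ^ 2 ≤
      g z + μ / 2 * ‖w‖ ^ (1 / p - 1) * ‖z‖ ^ 2) :
    ‖y‖ ≤ ‖x‖ ∧ Real.log (‖x‖ / ‖y‖) ≤ (1 - 1 / p) * Real.log (‖w‖ / ‖y‖) := by
  have hy_pos : 0 < ‖y‖ := norm_pos_iff.2 hy
  have hw_pos : 0 < ‖w‖ := hy_pos.trans_le hw
  have hp_inv : 1 / p ≤ 1 := (div_le_one (by linarith)).2 hp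
  set T := ‖w‖ ^ (1 / p - 1)
  set S := ‖y‖ ^ (1 / p - 1)
  have hTS : T ≤ S := Real.rpow_le_rpow_of_nonpos hy_pos hw (by linarith)
  have hS : 0 < S := by positivity
  have hx_var := hg.sub_le_inner_of_forall_add_norm_sq_le (c := μ * T)
    (fun z ↦ by convert hx_min z using 2 <;> ring) y
  have hy_var := hg.sub_le_inner_of_forall_add_norm_rpow_le
    (lt_add_of_pos_right 1 (by positivity)) hy_min x
  rw [show 1 + 1 / p - 2 = 1 / p - 1 by ring] at hy_var
  have hmono : ⟪T • x - S • y, x - y⟫ ≤ 0 := by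
    have hflip : ⟪x, y - x⟫ = -⟪x, x - y⟫ := by rw [← inner_neg_right, neg_sub]
    have hsum : 0 ≤ μ * (S * ⟪y, x - y⟫ - T * ⟪x, x - y⟫) := by
      rw [hflip] at hx_var; linarith
    rw [inner_sub_left, real_inner_smul_left, real_inner_smul_left]
    linarith [(mul_nonneg_iff_of_pos_left hμ).1 hsum]
  obtain ⟨hle, hmul⟩ := le_and_mul_le_mul_of_mul_sub_mul_nonpos hTS hS (norm_nonneg x)
    (mul_norm_sub_mul_norm_mul_norm_sub_norm_nonpos (by positivity) hS.le hmono)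
  exact ⟨hle, log_div_le_of_rpow_mul_le hy_pos hw_pos (hy_pos.trans_le hle) hmul⟩

end InnerProductSpace

theorem fixed_point_iteration_log_decay_general
    (n : ℕ) (g : EuclideanSpace ℝ (Fin n) → ℝ)
    (hg : ConvexOn ℝ Set.univ g) (μ p : ℝ) (hμ : 0 < μ) (hp : 1 ≤ p)
    (lamstar : EuclideanSpace ℝ (Fin n)) (hstar0 : lamstar ≠ 0)
    (hstar : ∀ z : EuclideanSpace ℝ (Fin n),
      g lamstar + μ / (1 + 1 / p) * ‖lamstar‖ ^ (1 + 1 / p) ≤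
        g z + μ / (1 + 1 / p) * ‖z‖ ^ (1 + 1 / p))
    (lam : ℕ → EuclideanSpace ℝ (Fin n)) (N : ℕ)
    (h0 : ‖lamstar‖ ≤ ‖lam 0‖)
    (hmin : ∀ k < N, ∀ z : EuclideanSpace ℝ (Fin n),
      g (lam (k + 1)) + μ / 2 * ‖lam k‖ ^ (1 / p - 1) * ‖lam (k + 1)‖ ^ 2 ≤
        g z + μ / 2 * ‖lam k‖ ^ (1 / p - 1) * ‖z‖ ^ 2) :
    ∀ k, 1 ≤ k → k ≤ N →
      Real.log (‖lam k‖ / ‖lamstar‖) ≤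
        (1 - 1 / p) ^ k * Real.log (‖lam 0‖ / ‖lamstar‖) := by
  have hfac : 0 ≤ 1 - 1 / p := sub_nonneg.2 ((div_le_one (by linarith)).2 hp)
  have key : ∀ k ≤ N, ‖lamstar‖ ≤ ‖lam k‖ ∧
      Real.log (‖lam k‖ / ‖lamstar‖) ≤ (1 - 1 / p) ^ k * Real.log (‖lam 0‖ / ‖lamstar‖) := by
    intro k
    induction k with
    | zero => exact fun _ ↦ ⟨h0, by simp⟩
    | succ k ih =>
      intro hk
      obtain ⟨hle, hlog⟩ := ih (by omega)
      obtain ⟨hle', hstep⟩ :=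
        norm_le_and_log_div_le_of_minimizers hg hμ hp hstar0 hstar hle (hmin k hk)
      refine ⟨hle', hstep.trans ?_⟩
      rw [pow_succ', mul_assoc]
      exact mul_le_mul_of_nonneg_left hlog hfac
  exact fun k _ hk ↦ (key k hk).2

/-- Along the fixed point iteration started above `‖λ*‖`, one has
`ln(‖λᵏ‖/‖λ*‖) ≤ (1 − 1/p)ᵏ ln(‖λ⁰‖/‖λ*‖)` for `k = 1, …, N`. -/
theorem fixed_point_iteration_log_decay
    (n : ℕ) (g : EuclideanSpace ℝ (Fin n) → ℝ)
    (hg : ConvexOn ℝ Set.univ g) (μ p : ℝ) (hμ : 0 < μ) (hp : 1 ≤ p)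
    (lamstar : EuclideanSpace ℝ (Fin n)) (hstar0 : lamstar ≠ 0)
    (hstar : ∀ z : EuclideanSpace ℝ (Fin n),
      g lamstar + μ / (1 + 1 / p) * ‖lamstar‖ ^ (1 + 1 / p) ≤
        g z + μ / (1 + 1 / p) * ‖z‖ ^ (1 + 1 / p))
    (lam : ℕ → EuclideanSpace ℝ (Fin n)) (N : ℕ)
    (h0 : ‖lamstar‖ ≤ ‖lam 0‖)
    (hmin : ∀ k < N, ∀ z : EuclideanSpace ℝ (Fin n),
      g (lam (k + 1)) + μ / 2 * ‖lam k‖ ^ (1 / p - 1) * ‖lam (k + 1)‖ ^ 2 ≤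
        g z + μ / 2 * ‖lam k‖ ^ (1 / p - 1) * ‖z‖ ^ 2)
    (hne : ∀ k, 1 ≤ k → k ≤ N → lam k ≠ lamstar) :
    ∀ k, 1 ≤ k → k ≤ N →
      Real.log (‖lam k‖ / ‖lamstar‖) ≤
        (1 - 1 / p) ^ k * Real.log (‖lam 0‖ / ‖lamstar‖) :=
  fixed_point_iteration_log_decay_general n g hg μ p hμ hp lamstar hstar0 hstar lam N h0 hmin
end

section
/- Let g : ℝⁿ → ℝ be convex, μ > 0, p ≥ 1. Suppose λ* ≠ 0 is a global minimizer of φ(λ) = g(λ) + (μ/(1+1/p))·‖λ‖^{1+1/p}. Let λ⁰, λ¹, …, λᴺ (N ≥ 1) be a sequence in ℝⁿ with ‖λ⁰‖ ≥ ‖λ*‖ such that for each 0 ≤ k < N, λᵏ⁺¹ is a global minimizer of λ ↦ g(λ) + (μ/2)·‖λᵏ‖^{(1/p)−1}·‖λ‖², and λᵏ ≠ λ* for k = 1, …, N. Then ‖λᴺ − λ*‖ ≤ ‖λ*‖·(exp((1 − 1/p)^{N−1} · ln(‖λ⁰‖/‖λ*‖)) − 1) ≤ (‖λ⁰‖ −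 ‖λ*‖)·(1 − 1/p)^{N−1}. -/
open Real

local notation "⟪" x ", " y "⟫" => @inner ℝ _ _ x y

/-- Bernoulli-type inequality for exponents in `[0,1]`. -/
lemma fp_bern {x θ : ℝ} (hx : 0 ≤ x) (h0 : 0 ≤ θ) (h1 : θ ≤ 1) :
    x ^ θ ≤ θ * x + (1 - θ) := by
  have h := Real.geom_mean_le_arith_mean2_weighted (w₁ := θ) (w₂ := 1 - θ) (p₁ := x)
    (p₂ := 1) h0 (by linarith) hx zero_le_one (by ring)
  simpa using h

/-- First-order condition consequence: if `a` minimizes `g + c‖·‖²` then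
`g a - g b ≤ 2c⟪a, b - a⟫`. -/
lemma fp_key {n : ℕ} (g : EuclideanSpace ℝ (Fin n) → ℝ) (hg : ConvexOn ℝ Set.univ g)
    {c : ℝ} (hc : 0 ≤ c) {a b : EuclideanSpace ℝ (Fin n)}
    (ha : ∀ z, g a + c * ‖a‖ ^ 2 ≤ g z + c * ‖z‖ ^ 2) :
    g a - g b ≤ 2 * c * ⟪a, b - a⟫ := by
  apply le_of_forall_pos_le_add
  intro ε hε
  set D : ℝ := c * ‖b - a‖ ^ 2 with hDdef
  have hD : 0 ≤ D := by positivity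
  set t : ℝ := min 1 (ε / (D + 1)) with htdef
  have ht0 : 0 < t := lt_min one_pos (by positivity)
  have ht1 : t ≤ 1 := min_le_left _ _
  have hkey := ha (a + t • (b - a))
  have hconv := hg.2 (Set.mem_univ a) (Set.mem_univ b) (by linarith : (0:ℝ) ≤ 1 - t)
    ht0.le (by ring)
  have heq : (1 - t) • a + t • b = a + t • (b - a) := by module
  rw [heq] at hconv
  have hnorm : ‖a + t • (b - a)‖ ^ 2
      = ‖a‖ ^ 2 + 2 * t * ⟪a, b - a⟫ + t ^ 2 * ‖b - a‖ ^ 2 := by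
    rw [norm_add_sq_real, real_inner_smul_right, norm_smul, Real.norm_eq_abs,
      abs_of_nonneg ht0.le, mul_pow]
    ring
  rw [hnorm] at hkey
  simp only [smul_eq_mul] at hconv
  have h1 : t * (g a - g b) ≤ t * (2 * c * ⟪a, b - a⟫ + t * D) := by
    have hDdef' : D = c * ‖b - a‖ ^ 2 := hDdef
    nlinarith [hkey, hconv, hDdef']
  have h2 : g a - g b ≤ 2 * c * ⟪a, b - a⟫ + t * D :=
    le_of_mul_le_mul_left h1 ht0
  have h3 : t * D ≤ ε := by
    have ht2 : t ≤ ε / (D + 1) := min_le_right _ _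
    have : t * D ≤ ε / (D + 1) * D := mul_le_mul_of_nonneg_right ht2 hD
    have h4 : ε / (D + 1) * D ≤ ε := by
      rw [div_mul_eq_mul_div, div_le_iff₀ (by positivity)]
      nlinarith
    linarith
  linarith

/-- Monotonicity-type inequality for minimizers of two Tikhonov regularizations. -/
lemma fp_two_min {n : ℕ} (g : EuclideanSpace ℝ (Fin n) → ℝ) (hg : ConvexOn ℝ Set.univ g)
    {c₁ c₂ : ℝ} (hc₁ : 0 ≤ c₁) (hc₂ : 0 ≤ c₂) {a b : EuclideanSpace ℝ (Fin n)}
    (ha : ∀ z, g a + c₁ * ‖a‖ ^ 2 ≤ g z + c₁ * ‖z‖ ^ 2)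
    (hb : ∀ z, g b + c₂ * ‖b‖ ^ 2 ≤ g z + c₂ * ‖z‖ ^ 2) :
    c₁ * ‖a‖ ^ 2 + c₂ * ‖b‖ ^ 2 ≤ (c₁ + c₂) * ⟪a, b⟫ := by
  have H1 := fp_key g hg hc₁ ha (b := b)
  have H2 := fp_key g hg hc₂ hb (b := a)
  rw [inner_sub_right, real_inner_self_eq_norm_sq] at H1 H2
  rw [real_inner_comm a b] at H2
  nlinarith [H1, H2]

/-- Pointwise comparison of the `1+1/p` power with its quadratic majorant at `T`. -/
lemma fp_pointwise {p T s : ℝ} (hp : 1 ≤ p) (hT : 0 < T) (hs : 0 ≤ s) :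
    s ^ (1 + 1 / p) - T ^ (1 + 1 / p)
      ≤ (1 + 1 / p) / 2 * T ^ (1 / p - 1) * (s ^ 2 - T ^ 2) := by
  have hp0 : 0 < p := lt_of_lt_of_le one_pos hp
  have hip0 : 0 < 1 / p := by positivity
  have hip1 : 1 / p ≤ 1 := by rw [div_le_one hp0]; exact hp
  set θ : ℝ := (1 + 1 / p) / 2 with hθdef
  have hθ0 : 0 ≤ θ := by positivity
  have hθ1 : θ ≤ 1 := by rw [hθdef]; linarith
  have hx : (0:ℝ) ≤ s ^ 2 / T ^ 2 := by positivity
  have hbern := fp_bern hx hθ0 hθ1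
  -- identify (s²/T²)^θ * T^(1+1/p) = s^(1+1/p)
  have hf1 : (s ^ 2 / T ^ 2) ^ θ = s ^ (1 + 1 / p) / T ^ (1 + 1 / p) := by
    have h1 : s ^ 2 / T ^ 2 = (s / T) ^ (2:ℕ) := by rw [div_pow]
    rw [h1, ← Real.rpow_natCast (s / T) 2, ← Real.rpow_mul (by positivity)]
    have h2 : ((2:ℕ):ℝ) * θ = 1 + 1 / p := by push_cast [hθdef]; ring
    rw [h2, Real.div_rpow hs hT.le]
  have hf2 : T ^ (1 + 1 / p) = T ^ (1 / p - 1) * T ^ 2 := by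
    rw [← Real.rpow_natCast T 2, ← Real.rpow_add hT]
    congr 1
    push_cast
    ring
  have hBpos : 0 < T ^ (1 + 1 / p) := Real.rpow_pos_of_pos hT _
  have hσpos : 0 < T ^ (1 / p - 1) := Real.rpow_pos_of_pos hT _
  have hmul := mul_le_mul_of_nonneg_right hbern hBpos.le
  rw [hf1, div_mul_cancel₀ _ (ne_of_gt hBpos)] at hmul
  -- rewrite RHS of hmul
  have hT2 : (0:ℝ) < T ^ 2 := by positivity
  have hrhs : (θ * (s ^ 2 / T ^ 2) + (1 - θ)) * T ^ (1 + 1 / p)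
      = θ * T ^ (1 / p - 1) * s ^ 2 + (1 - θ) * T ^ (1 + 1 / p) := by
    rw [hf2]; field_simp
  rw [hrhs] at hmul
  nlinarith [hmul, hf2, hσpos]

set_option maxHeartbeats 1000000 in
/-- One step of the iteration: norm lower bound, geometric-mean upper bound,
and distance bound. -/
lemma fp_step {n : ℕ} (g : EuclideanSpace ℝ (Fin n) → ℝ) (hg : ConvexOn ℝ Set.univ g)
    {μ p : ℝ} (hμ : 0 < μ) (hp : 1 ≤ p)
    {lamstar w v : EuclideanSpace ℝ (Fin n)} (hT : 0 < ‖lamstar‖) (hTw : ‖lamstar‖ ≤ ‖w‖)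
    (hstarmin : ∀ z, g lamstar + μ / 2 * ‖lamstar‖ ^ (1 / p - 1) * ‖lamstar‖ ^ 2
      ≤ g z + μ / 2 * ‖lamstar‖ ^ (1 / p - 1) * ‖z‖ ^ 2)
    (hvmin : ∀ z, g v + μ / 2 * ‖w‖ ^ (1 / p - 1) * ‖v‖ ^ 2
      ≤ g z + μ / 2 * ‖w‖ ^ (1 / p - 1) * ‖z‖ ^ 2) :
    (‖lamstar‖ ≤ ‖v‖ ∧ ‖v‖ ≤ ‖lamstar‖ ^ (1 / p) * ‖w‖ ^ (1 - 1 / p)) ∧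
      ‖v - lamstar‖ ≤ ‖w‖ - ‖lamstar‖ := by
  have hp0 : 0 < p := lt_of_lt_of_le one_pos hp
  have hip0 : 0 < 1 / p := by positivity
  have hip1 : 1 / p ≤ 1 := by rw [div_le_one hp0]; exact hp
  set T : ℝ := ‖lamstar‖ with hTdef
  set W : ℝ := ‖w‖ with hWdef
  set s : ℝ := ‖v‖ with hsdef
  have hW : 0 < W := lt_of_lt_of_le hT hTw
  have hs0 : 0 ≤ s := norm_nonneg v
  set c₁ : ℝ := μ / 2 * T ^ (1 / p - 1) with hc₁def
  set c₂ : ℝ := μ / 2 * W ^ (1 / p - 1) with hc₂def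
  have hc₁pos : 0 < c₁ := by
    rw [hc₁def]; have := Real.rpow_pos_of_pos hT (1 / p - 1); positivity
  have hc₂pos : 0 < c₂ := by
    rw [hc₂def]; have := Real.rpow_pos_of_pos hW (1 / p - 1); positivity
  have hc21 : c₂ ≤ c₁ := by
    rw [hc₁def, hc₂def]
    have := Real.rpow_le_rpow_of_nonpos hT hTw (by linarith : 1 / p - 1 ≤ 0)
    have hμ2 : (0:ℝ) ≤ μ / 2 := by positivity
    exact mul_le_mul_of_nonneg_left this hμ2
  have hB := fp_two_min g hg hc₁pos.le hc₂pos.le hstarmin hvmin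
  have hCS : ⟪lamstar, v⟫ ≤ T * s := real_inner_le_norm lamstar v
  rw [← hTdef, ← hsdef] at hB
  clear_value T W s c₁ c₂
  have hD : (c₁ * T - c₂ * s) * (T - s) ≤ 0 := by
    nlinarith [hB, mul_le_mul_of_nonneg_left hCS (by positivity : (0:ℝ) ≤ c₁ + c₂)]
  -- rpow identities
  have hTT : T ^ (1 / p) = T ^ (1 / p - 1) * T := by
    have h := Real.rpow_add hT (1 / p - 1) 1
    rw [Real.rpow_one, show 1 / p - 1 + 1 = 1 / p by ring] at h
    exact h
  have hWW : W ^ (1 / p - 1) * W ^ (1 - 1 / p) = 1 := by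
    rw [← Real.rpow_add hW, show (1 / p - 1) + (1 - 1 / p) = 0 by ring, Real.rpow_zero]
  have hWpow : 0 < W ^ (1 - 1 / p) := Real.rpow_pos_of_pos hW _
  have hTpowle : T ^ (1 - 1 / p) ≤ W ^ (1 - 1 / p) :=
    Real.rpow_le_rpow hT.le hTw (by linarith)
  have hTsplit : T = T ^ (1 / p) * T ^ (1 - 1 / p) := by
    rw [← Real.rpow_add hT, show 1 / p + (1 - 1 / p) = 1 by ring, Real.rpow_one]
  -- lower bound T ≤ s
  have h1 : T ≤ s := by
    by_contra h
    push_neg at h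
    have h1a : c₂ * s ≤ c₁ * s := mul_le_mul_of_nonneg_right hc21 hs0
    have h1b : c₁ * s < c₁ * T := by exact mul_lt_mul_of_pos_left h hc₁pos
    nlinarith [hD]
  -- upper bound s ≤ T^{1/p} W^{1-1/p}
  have h2 : s ≤ T ^ (1 / p) * W ^ (1 - 1 / p) := by
    rcases eq_or_lt_of_le h1 with heq | hlt
    · calc s = T := heq.symm
        _ = T ^ (1 / p) * T ^ (1 - 1 / p) := hTsplit
        _ ≤ T ^ (1 / p) * W ^ (1 - 1 / p) :=
          mul_le_mul_of_nonneg_left hTpowle (Real.rpow_pos_of_pos hT _).le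
    · have hA : c₂ * s ≤ c₁ * T := by nlinarith [hD]
      have h3 : W ^ (1 / p - 1) * s ≤ T ^ (1 / p - 1) * T := by
        have h3' : μ / 2 * (W ^ (1 / p - 1) * s) ≤ μ / 2 * (T ^ (1 / p - 1) * T) := by
          rw [hc₁def, hc₂def] at hA; linarith [hA]
        exact le_of_mul_le_mul_left h3' (by positivity)
      rw [← hTT] at h3
      have h4 : W ^ (1 / p - 1) * s * W ^ (1 - 1 / p) ≤ T ^ (1 / p) * W ^ (1 - 1 / p) :=
        mul_le_mul_of_nonneg_right h3 hWpow.le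
      have h5 : W ^ (1 / p - 1) * s * W ^ (1 - 1 / p) = s := by
        rw [mul_comm (W ^ (1 / p - 1)) s, mul_assoc, hWW, mul_one]
      linarith
  -- s ≤ W
  have hsW : s ≤ W := by
    have hq : T ^ (1 / p) ≤ W ^ (1 / p) := Real.rpow_le_rpow hT.le hTw hip0.le
    have hWsplit : W = W ^ (1 / p) * W ^ (1 - 1 / p) := by
      rw [← Real.rpow_add hW, show 1 / p + (1 - 1 / p) = 1 by ring, Real.rpow_one]
    calc s ≤ T ^ (1 / p) * W ^ (1 - 1 / p) := h2
      _ ≤ W ^ (1 / p) * W ^ (1 - 1 / p) := mul_le_mul_of_nonneg_right hq hWpow.le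
      _ = W := hWsplit.symm
  -- distance bound
  have hdist : ‖v - lamstar‖ ≤ W - T := by
    have hns : ‖lamstar - v‖ ^ 2 = T ^ 2 - 2 * ⟪lamstar, v⟫ + s ^ 2 := by
      rw [norm_sub_sq_real, ← hTdef, ← hsdef]
    have hC : (c₁ + c₂) * ‖lamstar - v‖ ^ 2 ≤ (c₁ - c₂) * (s ^ 2 - T ^ 2) := by
      rw [hns]; linarith [hB]
    have hc1T : c₁ * T = μ / 2 * T ^ (1 / p) := by rw [hTT, hc₁def]; ring
    have hc2W : c₂ * W = μ / 2 * W ^ (1 / p) := by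
      have hWW' : W ^ (1 / p) = W ^ (1 / p - 1) * W := by
        have h := Real.rpow_add hW (1 / p - 1) 1
        rw [Real.rpow_one, show 1 / p - 1 + 1 = 1 / p by ring] at h
        exact h
      rw [hWW', hc₂def]; ring
    have hkeyTW : c₁ * T ≤ c₂ * W := by
      rw [hc1T, hc2W]
      have h := Real.rpow_le_rpow hT.le hTw hip0.le
      exact mul_le_mul_of_nonneg_left h (by positivity)
    have hstep2a : (c₁ - c₂) * (s ^ 2 - T ^ 2) ≤ (c₁ - c₂) * (W ^ 2 - T ^ 2) := by
      have hsw2 : s ^ 2 ≤ W ^ 2 := pow_le_pow_left₀ hs0 hsW 2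
      have := mul_le_mul_of_nonneg_left (by linarith : s ^ 2 - T ^ 2 ≤ W ^ 2 - T ^ 2)
        (sub_nonneg.mpr hc21)
      linarith
    have hstep2b : (c₁ - c₂) * (W ^ 2 - T ^ 2) ≤ (c₁ + c₂) * (W - T) ^ 2 := by
      have hprod : 0 ≤ (c₂ * W - c₁ * T) * (W - T) :=
        mul_nonneg (sub_nonneg.mpr hkeyTW) (sub_nonneg.mpr hTw)
      nlinarith [hprod]
    have hstep2 : (c₁ - c₂) * (s ^ 2 - T ^ 2) ≤ (c₁ + c₂) * (W - T) ^ 2 :=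
      le_trans hstep2a hstep2b
    have hsq : ‖lamstar - v‖ ^ 2 ≤ (W - T) ^ 2 := by
      have := le_trans hC hstep2
      exact le_of_mul_le_mul_left (by linarith) (by positivity : (0:ℝ) < c₁ + c₂)
    rw [norm_sub_rev]
    exact le_of_pow_le_pow_left₀ two_ne_zero (by linarith) hsq
  exact ⟨⟨h1, h2⟩, hdist⟩

set_option maxHeartbeats 1000000 in
/-- Linear convergence of the fixed point iteration started above `‖λ*‖`:
`‖λᴺ − λ*‖ ≤ ‖λ*‖(e^{(1−1/p)^{N−1} ln(‖λ⁰‖/‖λ*‖)} − 1) ≤ (‖λ⁰‖ − ‖λ*‖)(1 − 1/p)^{N−1}`. -/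
theorem fixed_point_iteration_linear_convergence_above
    (n : ℕ) (g : EuclideanSpace ℝ (Fin n) → ℝ)
    (hg : ConvexOn ℝ Set.univ g) (μ p : ℝ) (hμ : 0 < μ) (hp : 1 ≤ p)
    (lamstar : EuclideanSpace ℝ (Fin n)) (hstar0 : lamstar ≠ 0)
    (hstar : ∀ z : EuclideanSpace ℝ (Fin n),
      g lamstar + μ / (1 + 1 / p) * ‖lamstar‖ ^ (1 + 1 / p) ≤
        g z + μ / (1 + 1 / p) * ‖z‖ ^ (1 + 1 / p))
    (lam : ℕ → EuclideanSpace ℝ (Fin n)) (N : ℕ) (hN : 1 ≤ N)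
    (h0 : ‖lamstar‖ ≤ ‖lam 0‖)
    (hmin : ∀ k < N, ∀ z : EuclideanSpace ℝ (Fin n),
      g (lam (k + 1)) + μ / 2 * ‖lam k‖ ^ (1 / p - 1) * ‖lam (k + 1)‖ ^ 2 ≤
        g z + μ / 2 * ‖lam k‖ ^ (1 / p - 1) * ‖z‖ ^ 2)
    (hne : ∀ k, 1 ≤ k → k ≤ N → lam k ≠ lamstar) :
    ‖lam N - lamstar‖ ≤
        ‖lamstar‖ *
          (Real.exp ((1 - 1 / p) ^ (N - 1) * Real.log (‖lam 0‖ / ‖lamstar‖)) - 1) ∧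
      ‖lamstar‖ *
          (Real.exp ((1 - 1 / p) ^ (N - 1) * Real.log (‖lam 0‖ / ‖lamstar‖)) - 1) ≤
        (‖lam 0‖ - ‖lamstar‖) * (1 - 1 / p) ^ (N - 1) := by
  have hp0 : 0 < p := lt_of_lt_of_le one_pos hp
  have hip0 : 0 < 1 / p := by positivity
  have hip1 : 1 / p ≤ 1 := by rw [div_le_one hp0]; exact hp
  have hT : 0 < ‖lamstar‖ := norm_pos_iff.mpr hstar0
  have hqpos : 0 < 1 + 1 / p := by linarith
  -- λ* minimizes the quadratic model with σ* = ‖λ*‖^{1/p-1}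
  have hqstar : ∀ z, g lamstar + μ / 2 * ‖lamstar‖ ^ (1 / p - 1) * ‖lamstar‖ ^ 2
      ≤ g z + μ / 2 * ‖lamstar‖ ^ (1 / p - 1) * ‖z‖ ^ 2 := by
    intro z
    have h := hstar z
    have hpw := fp_pointwise hp hT (norm_nonneg z)
    have hmm := mul_le_mul_of_nonneg_left hpw
      (by positivity : (0:ℝ) ≤ μ / (1 + 1 / p))
    have hre : μ / (1 + 1 / p) *
        ((1 + 1 / p) / 2 * ‖lamstar‖ ^ (1 / p - 1) * (‖z‖ ^ 2 - ‖lamstar‖ ^ 2))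
        = μ / 2 * ‖lamstar‖ ^ (1 / p - 1) * (‖z‖ ^ 2 - ‖lamstar‖ ^ 2) := by
      field_simp
    rw [hre] at hmm
    linarith [h, hmm]
  -- invariant: norms stay above ‖λ*‖ and decrease geometrically in log scale
  have inv : ∀ k, k ≤ N → ‖lamstar‖ ≤ ‖lam k‖ ∧
      Real.log ‖lam k‖ - Real.log ‖lamstar‖
        ≤ (1 - 1 / p) ^ k * (Real.log ‖lam 0‖ - Real.log ‖lamstar‖) := by
    intro k
    induction k with
    | zero => intro _; exact ⟨h0, by simp⟩
    | succ k ih =>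
      intro hk
      have hkN : k < N := Nat.lt_of_succ_le hk
      obtain ⟨hTk, hlogk⟩ := ih (Nat.le_of_lt hkN)
      obtain ⟨⟨hlow, hup⟩, -⟩ := fp_step g hg hμ hp hT hTk hqstar (hmin k hkN)
      refine ⟨hlow, ?_⟩
      have hk0 : 0 < ‖lam k‖ := lt_of_lt_of_le hT hTk
      have hk10 : 0 < ‖lam (k+1)‖ := lt_of_lt_of_le hT hlow
      have hlog1 : Real.log ‖lam (k+1)‖
          ≤ 1 / p * Real.log ‖lamstar‖ + (1 - 1 / p) * Real.log ‖lam k‖ := by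
        have h := Real.log_le_log hk10 hup
        rw [Real.log_mul (ne_of_gt (Real.rpow_pos_of_pos hT _))
          (ne_of_gt (Real.rpow_pos_of_pos hk0 _)),
          Real.log_rpow hT, Real.log_rpow hk0] at h
        exact h
      have hfac : (0:ℝ) ≤ 1 - 1 / p := by linarith
      have h2 := mul_le_mul_of_nonneg_left hlogk hfac
      rw [pow_succ]
      nlinarith [hlog1, h2]
  -- apply the invariant and the last step
  obtain ⟨hTN1, hlogN1⟩ := inv (N - 1) (Nat.sub_le N 1)
  have hNsub : N - 1 + 1 = N := Nat.sub_add_cancel hN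
  have hminN := hmin (N - 1) (by omega)
  rw [hNsub] at hminN
  obtain ⟨-, hdist⟩ := fp_step g hg hμ hp hT hTN1 hqstar hminN
  have hlam0 : 0 < ‖lam 0‖ := lt_of_lt_of_le hT h0
  have hW0 : 0 < ‖lam (N - 1)‖ := lt_of_lt_of_le hT hTN1
  have hLdiv : Real.log (‖lam 0‖ / ‖lamstar‖)
      = Real.log ‖lam 0‖ - Real.log ‖lamstar‖ :=
    Real.log_div (ne_of_gt hlam0) (ne_of_gt hT)
  set θ : ℝ := (1 - 1 / p) ^ (N - 1) with hθdef
  have hθ0 : 0 ≤ θ := pow_nonneg (by linarith) _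
  have hθ1 : θ ≤ 1 := pow_le_one₀ (by linarith) (by linarith)
  have hexpW : ‖lam (N - 1)‖ ≤ ‖lamstar‖ *
      Real.exp (θ * (Real.log ‖lam 0‖ - Real.log ‖lamstar‖)) := by
    calc ‖lam (N - 1)‖ = Real.exp (Real.log ‖lam (N - 1)‖) := (Real.exp_log hW0).symm
      _ ≤ Real.exp (Real.log ‖lamstar‖
          + θ * (Real.log ‖lam 0‖ - Real.log ‖lamstar‖)) :=
        Real.exp_le_exp.mpr (by linarith [hlogN1])
      _ = ‖lamstar‖ * Real.exp (θ * (Real.log ‖lam 0‖ - Real.log ‖lamstar‖)) := by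
        rw [Real.exp_add, Real.exp_log hT]
  constructor
  · rw [hLdiv]
    linarith [hdist, hexpW]
  · have hr : (0:ℝ) < ‖lam 0‖ / ‖lamstar‖ := by positivity
    have hrpow : Real.exp (θ * Real.log (‖lam 0‖ / ‖lamstar‖))
        = (‖lam 0‖ / ‖lamstar‖) ^ θ := by
      rw [Real.rpow_def_of_pos hr, mul_comm]
    have hb := fp_bern hr.le hθ0 hθ1
    have h2 := mul_le_mul_of_nonneg_left hb hT.le
    have h3 : ‖lamstar‖ * (θ * (‖lam 0‖ / ‖lamstar‖) + (1 - θ))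
        = θ * ‖lam 0‖ + ‖lamstar‖ - θ * ‖lamstar‖ := by
      field_simp
      ring
    rw [hrpow]
    rw [h3] at h2
    nlinarith [h2]
end

section
/- Let g : ℝⁿ → ℝ be convex, μ > 0, p ≥ 1. Suppose λ* ≠ 0 is a global minimizer of φ(λ) = g(λ) + (μ/(1+1/p))·‖λ‖^{1+1/p}. Let λ⁰, λ¹, …, λᴺ (N ≥ 1) be a sequence in ℝⁿ with 0 < ‖λ⁰‖ ≤ ‖λ*‖ such that for each 0 ≤ k < N, λᵏ⁺¹ is a global minimizer of λ ↦ g(λ) + (μ/2)·‖λᵏ‖^{(1/p)−1}·‖λ‖², and λᵏ ≠ λ* for k = 1, …, N. Then ‖λᴺ − λ*‖ ≤ (1 − 1/p)·‖λ*‖·(exp((1 − 1/p)^{N−1} · ln(‖λ*‖/‖λ⁰‖)) − 1) ≤ (‖λ*‖/‖λ⁰‖)·(‖λ*‖ − ‖λ⁰‖)·(1 − 1/p)^{N}. -/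
open RealInnerProductSpace

/-- Gradient-type inequality for a global minimizer of `g + (σ/2)‖·‖²`. -/
lemma aux_grad_ineq {E : Type*} [NormedAddCommGroup E] [InnerProductSpace ℝ E]
    {g : E → ℝ} (hg : ConvexOn ℝ Set.univ g) {σ : ℝ} (hσ : 0 ≤ σ) {x : E}
    (hx : ∀ z, g x + σ / 2 * ‖x‖ ^ 2 ≤ g z + σ / 2 * ‖z‖ ^ 2) (y : E) :
    g x - g y ≤ σ * ⟪x, y - x⟫ := by
  set d : E := y - x with hd
  set C : ℝ := σ * ‖d‖ ^ 2 / 2 with hC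
  have hC0 : 0 ≤ C := by positivity
  have key : ∀ t : ℝ, 0 < t → t ≤ 1 → g x - g y ≤ σ * ⟪x, d⟫ + t * C := by
    intro t ht0 ht1
    have hconv := hg.2 (Set.mem_univ x) (Set.mem_univ y)
      (show (0:ℝ) ≤ 1 - t by linarith) (le_of_lt ht0) (by ring)
    have heq : (1 - t) • x + t • y = x + t • d := by
      rw [hd]; rw [smul_sub]; module
    rw [heq] at hconv
    have hmin := hx (x + t • d)
    have hnorm : ‖x + t • d‖ ^ 2 = ‖x‖ ^ 2 + 2 * (t * ⟪x, d⟫) + t ^ 2 * ‖d‖ ^ 2 := by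
      rw [norm_add_sq_real, real_inner_smul_right, norm_smul, Real.norm_eq_abs, mul_pow,
        sq_abs]
    rw [hnorm] at hmin
    rw [smul_eq_mul, smul_eq_mul] at hconv
    have h1 : g x ≤ (1 - t) * g x + t * g y + σ / 2 * (2 * (t * ⟪x, d⟫) + t ^ 2 * ‖d‖ ^ 2) := by
      linarith [hconv, hmin]
    have h2 : t * (g x - g y) ≤ t * (σ * ⟪x, d⟫ + t * C) := by
      rw [hC]; ring_nf; ring_nf at h1; nlinarith
    exact le_of_mul_le_mul_left (by linarith [h2]) ht0
  refine le_of_forall_pos_le_add fun ε hε => ?_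
  have ht := key (min 1 (ε / (C + 1))) (lt_min one_pos (by positivity)) (min_le_left _ _)
  have : min 1 (ε / (C + 1)) * C ≤ ε := by
    calc min 1 (ε / (C + 1)) * C ≤ (ε / (C + 1)) * C :=
          mul_le_mul_of_nonneg_right (min_le_right _ _) hC0
      _ ≤ ε := by rw [div_mul_eq_mul_div, div_le_iff₀ (by linarith)]; nlinarith
  linarith

/-- Comparison of minimizers of two quadratic-regularized problems. -/
lemma aux_compare {E : Type*} [NormedAddCommGroup E] [InnerProductSpace ℝ E]
    {g : E → ℝ} (hg : ConvexOn ℝ Set.univ g) {σ₁ σ₂ : ℝ} (h2 : 0 < σ₂) (h12 : σ₂ ≤ σ₁)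
    {x₁ x₂ : E}
    (hx₁ : ∀ z, g x₁ + σ₁ / 2 * ‖x₁‖ ^ 2 ≤ g z + σ₁ / 2 * ‖z‖ ^ 2)
    (hx₂ : ∀ z, g x₂ + σ₂ / 2 * ‖x₂‖ ^ 2 ≤ g z + σ₂ / 2 * ‖z‖ ^ 2) :
    σ₂ * ‖x₂‖ ≤ σ₁ * ‖x₁‖ ∧ ‖x₁‖ ≤ ‖x₂‖ ∧
      σ₂ * ‖x₁ - x₂‖ ≤ (σ₁ - σ₂) * ‖x₂‖ := by
  have h1 : 0 < σ₁ := lt_of_lt_of_le h2 h12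
  have k1 := aux_grad_ineq hg h1.le hx₁ x₂
  have k2 := aux_grad_ineq hg h2.le hx₂ x₁
  have e1 : ⟪x₂, x₁ - x₂⟫ = ⟪x₁, x₂⟫ - ‖x₂‖ ^ 2 := by
    rw [inner_sub_right, real_inner_comm, real_inner_self_eq_norm_sq]
  have e2 : ⟪x₁, x₂ - x₁⟫ = ⟪x₁, x₂⟫ - ‖x₁‖ ^ 2 := by
    rw [inner_sub_right, real_inner_self_eq_norm_sq]
  rw [e2] at k1; rw [e1] at k2
  -- (★)  (σ₁+σ₂)⟪x₁,x₂⟫ ≥ σ₁‖x₁‖² + σ₂‖x₂‖²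
  have star : σ₁ * ‖x₁‖ ^ 2 + σ₂ * ‖x₂‖ ^ 2 ≤ (σ₁ + σ₂) * ⟪x₁, x₂⟫ := by nlinarith
  have hcs : ⟪x₁, x₂⟫ ≤ ‖x₁‖ * ‖x₂‖ := real_inner_le_norm x₁ x₂
  have hn1 : (0:ℝ) ≤ ‖x₁‖ := norm_nonneg _
  have hn2 : (0:ℝ) ≤ ‖x₂‖ := norm_nonneg _
  have quad : (σ₁ * ‖x₁‖ - σ₂ * ‖x₂‖) * (‖x₁‖ - ‖x₂‖) ≤ 0 := by nlinarith
  have hb : ‖x₁‖ ≤ ‖x₂‖ := by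
    by_contra hcon
    push_neg at hcon
    have p1 : σ₂ * ‖x₂‖ < σ₁ * ‖x₁‖ :=
      lt_of_lt_of_le (mul_lt_mul_of_pos_left hcon h2) (mul_le_mul_of_nonneg_right h12 hn1)
    have := mul_pos (sub_pos.2 p1) (sub_pos.2 hcon)
    linarith
  have ha : σ₂ * ‖x₂‖ ≤ σ₁ * ‖x₁‖ := by
    by_contra hcon
    push_neg at hcon
    have p2 : ‖x₁‖ < ‖x₂‖ := by
      have : σ₂ * ‖x₁‖ < σ₂ * ‖x₂‖ :=
        lt_of_le_of_lt (mul_le_mul_of_nonneg_right h12 hn1) hcon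
      exact lt_of_mul_lt_mul_left this h2.le
    have := mul_pos_of_neg_of_neg (sub_neg.2 hcon) (sub_neg.2 p2)
    linarith
  refine ⟨ha, hb, ?_⟩
  -- distance bound
  have hdist2 : σ₂ * ‖x₁ - x₂‖ ^ 2 ≤ (σ₁ - σ₂) * (⟪x₁, x₂⟫ - ‖x₁‖ ^ 2) := by
    have e3 : ‖x₁ - x₂‖ ^ 2 = ‖x₁‖ ^ 2 - 2 * ⟪x₁, x₂⟫ + ‖x₂‖ ^ 2 := by
      rw [sub_eq_add_neg, norm_add_sq_real, inner_neg_right, norm_neg]; ring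
    nlinarith
  have hcs2 : ⟪x₁, x₂⟫ - ‖x₁‖ ^ 2 ≤ ‖x₁‖ * ‖x₁ - x₂‖ := by
    calc ⟪x₁, x₂⟫ - ‖x₁‖ ^ 2 = ⟪x₁, x₂ - x₁⟫ := e2.symm
      _ ≤ ‖x₁‖ * ‖x₂ - x₁‖ := real_inner_le_norm _ _
      _ = ‖x₁‖ * ‖x₁ - x₂‖ := by rw [norm_sub_rev]
  rcases eq_or_lt_of_le (norm_nonneg (x₁ - x₂)) with h | h
  · rw [← h]; nlinarith
  · have : σ₂ * ‖x₁ - x₂‖ ≤ (σ₁ - σ₂) * ‖x₁‖ := by nlinarith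
    nlinarith


/-- Scalar inequality: `t ↦ t^{1+τ}/(1+τ) - R^{τ-1}t²/2` is minimized at `t = R`. -/
lemma aux_scalar {τ R : ℝ} (hτ0 : 0 < τ) (hτ1 : τ ≤ 1) (hR : 0 < R) {s : ℝ} (hs : 0 ≤ s) :
    s ^ (1 + τ) / (1 + τ) - R ^ (τ - 1) * s ^ 2 / 2 ≤
      R ^ (1 + τ) / (1 + τ) - R ^ (τ - 1) * R ^ 2 / 2 := by
  have hq : (0:ℝ) < 1 + τ := by linarith
  -- weighted AM-GM
  have amgm := Real.geom_mean_le_arith_mean2_weighted (w₁ := (1 + τ) / 2) (w₂ := (1 - τ) / 2)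
    (p₁ := s ^ 2) (p₂ := R ^ 2) (by linarith) (by linarith) (by positivity) (by positivity)
    (by ring)
  have e1 : (s ^ 2) ^ ((1 + τ) / 2) = s ^ (1 + τ) := by
    rw [← Real.rpow_natCast s 2, ← Real.rpow_mul hs]
    congr 1; ring
  have e2 : (R ^ 2) ^ ((1 - τ) / 2) = R ^ (1 - τ) := by
    rw [← Real.rpow_natCast R 2, ← Real.rpow_mul hR.le]
    congr 1; ring
  rw [e1, e2] at amgm
  -- multiply by R^(τ-1) > 0
  have hRp : (0:ℝ) < R ^ (τ - 1) := Real.rpow_pos_of_pos hR _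
  have key := mul_le_mul_of_nonneg_left amgm hRp.le
  have e3 : R ^ (τ - 1) * (s ^ (1 + τ) * R ^ (1 - τ)) = s ^ (1 + τ) := by
    rw [show R ^ (τ - 1) * (s ^ (1 + τ) * R ^ (1 - τ)) =
      (R ^ (τ - 1) * R ^ (1 - τ)) * s ^ (1 + τ) by ring, ← Real.rpow_add hR]
    norm_num
  have e4 : R ^ (τ - 1) * R ^ 2 = R ^ (1 + τ) := by
    rw [← Real.rpow_natCast R 2, ← Real.rpow_add hR]
    congr 1; ring
  rw [e3, mul_add] at key
  -- key : s^(1+τ) ≤ R^(τ-1) * ((1+τ)/2 * s^2) + R^(τ-1) * ((1-τ)/2 * R^2)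
  have key2 : 2 * s ^ (1 + τ) ≤ (1 + τ) * (R ^ (τ - 1) * s ^ 2) + (1 - τ) * R ^ (1 + τ) := by
    nlinarith [key, e4]
  have final : (s ^ (1 + τ) - R ^ (1 + τ)) / (1 + τ) ≤
      (R ^ (τ - 1) * s ^ 2 - R ^ (τ - 1) * R ^ 2) / 2 := by
    rw [div_le_div_iff₀ hq two_pos]
    nlinarith [key2, e4]
  rw [sub_div, sub_div] at final
  linarith


/-- Linear convergence of the fixed point iteration started below `‖λ*‖`:
`‖λᴺ − λ*‖ ≤ (1−1/p)‖λ*‖(e^{(1−1/p)^{N−1} ln(‖λ*‖/‖λ⁰‖)} − 1)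
  ≤ (‖λ*‖/‖λ⁰‖)(‖λ*‖ − ‖λ⁰‖)(1 − 1/p)^N`. -/
theorem fixed_point_iteration_linear_convergence_below
    (n : ℕ) (g : EuclideanSpace ℝ (Fin n) → ℝ)
    (hg : ConvexOn ℝ Set.univ g) (μ p : ℝ) (hμ : 0 < μ) (hp : 1 ≤ p)
    (lamstar : EuclideanSpace ℝ (Fin n)) (hstar0 : lamstar ≠ 0)
    (hstar : ∀ z : EuclideanSpace ℝ (Fin n),
      g lamstar + μ / (1 + 1 / p) * ‖lamstar‖ ^ (1 + 1 / p) ≤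
        g z + μ / (1 + 1 / p) * ‖z‖ ^ (1 + 1 / p))
    (lam : ℕ → EuclideanSpace ℝ (Fin n)) (N : ℕ) (hN : 1 ≤ N)
    (h00 : 0 < ‖lam 0‖) (h0 : ‖lam 0‖ ≤ ‖lamstar‖)
    (hmin : ∀ k < N, ∀ z : EuclideanSpace ℝ (Fin n),
      g (lam (k + 1)) + μ / 2 * ‖lam k‖ ^ (1 / p - 1) * ‖lam (k + 1)‖ ^ 2 ≤
        g z + μ / 2 * ‖lam k‖ ^ (1 / p - 1) * ‖z‖ ^ 2)
    (hne : ∀ k, 1 ≤ k → k ≤ N → lam k ≠ lamstar) :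
    ‖lam N - lamstar‖ ≤
        (1 - 1 / p) * ‖lamstar‖ *
          (Real.exp ((1 - 1 / p) ^ (N - 1) * Real.log (‖lamstar‖ / ‖lam 0‖)) - 1) ∧
      (1 - 1 / p) * ‖lamstar‖ *
          (Real.exp ((1 - 1 / p) ^ (N - 1) * Real.log (‖lamstar‖ / ‖lam 0‖)) - 1) ≤
        ‖lamstar‖ / ‖lam 0‖ * (‖lamstar‖ - ‖lam 0‖) * (1 - 1 / p) ^ N := by
  have hp0 : (0:ℝ) < p := lt_of_lt_of_le one_pos hp
  set τ : ℝ := 1 / p with hτdef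
  have hτ0 : 0 < τ := by positivity
  have hτ1 : τ ≤ 1 := by rw [hτdef]; exact (div_le_one hp0).mpr hp
  have hθ0 : (0:ℝ) ≤ 1 - τ := by linarith
  set R : ℝ := ‖lamstar‖ with hRdef
  have hR : 0 < R := by rw [hRdef]; exact norm_pos_iff.mpr hstar0
  have hσs : (0:ℝ) < μ * R ^ (τ - 1) := by positivity
  -- Fact A : lamstar also minimizes the quadratic surrogate with its own norm
  have factA : ∀ z : EuclideanSpace ℝ (Fin n),
      g lamstar + (μ * R ^ (τ - 1)) / 2 * ‖lamstar‖ ^ 2 ≤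
        g z + (μ * R ^ (τ - 1)) / 2 * ‖z‖ ^ 2 := by
    intro z
    have h1 := hstar z
    have h2 := aux_scalar hτ0 hτ1 hR (norm_nonneg z)
    have h3 := mul_le_mul_of_nonneg_left h2 hμ.le
    rw [← hRdef]
    have h3' : μ/(1+τ)*‖z‖^(1+τ) - μ*R^(τ-1)/2*‖z‖^2 ≤
        μ/(1+τ)*R^(1+τ) - μ*R^(τ-1)/2*R^2 := by
      ring_nf
      ring_nf at h3
      linarith
    linarith [h1, h3']
  -- one-step estimates
  have step : ∀ k, k < N → 0 < ‖lam k‖ → ‖lam k‖ ≤ R →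
      0 < ‖lam (k+1)‖ ∧ ‖lam (k+1)‖ ≤ R ∧
      Real.log R - Real.log ‖lam (k+1)‖ ≤ (1 - τ) * (Real.log R - Real.log ‖lam k‖) ∧
      (μ * R ^ (τ - 1)) * ‖lam (k+1) - lamstar‖ ≤
        (μ * ‖lam k‖ ^ (τ - 1) - μ * R ^ (τ - 1)) * R := by
    intro k hkN hk0 hkR
    have hσk0 : (0:ℝ) < μ * ‖lam k‖ ^ (τ - 1) := by positivity
    have hσks : μ * R ^ (τ - 1) ≤ μ * ‖lam k‖ ^ (τ - 1) :=
      mul_le_mul_of_nonneg_left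
        (Real.rpow_le_rpow_of_nonpos hk0 hkR (by linarith)) hμ.le
    have hmin' : ∀ z, g (lam (k+1)) + (μ * ‖lam k‖ ^ (τ - 1)) / 2 * ‖lam (k+1)‖ ^ 2 ≤
        g z + (μ * ‖lam k‖ ^ (τ - 1)) / 2 * ‖z‖ ^ 2 := by
      intro z
      have h := hmin k hkN z
      linarith [h]
    obtain ⟨ha, hb, hc⟩ := aux_compare hg hσs hσks hmin' factA
    rw [← hRdef] at ha hb hc
    have E : (μ * ‖lam k‖ ^ (τ - 1)) * (R ^ τ * ‖lam k‖ ^ (1 - τ)) = (μ * R ^ (τ - 1)) * R := by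
      have e1 : ‖lam k‖ ^ (τ - 1) * ‖lam k‖ ^ (1 - τ) = 1 := by
        rw [← Real.rpow_add hk0]; norm_num
      have e2 : R ^ (τ - 1 + 1) = R ^ (τ - 1) * R := Real.rpow_add_one hR.ne' (τ - 1)
      rw [show τ - 1 + 1 = τ by ring] at e2
      calc (μ * ‖lam k‖ ^ (τ - 1)) * (R ^ τ * ‖lam k‖ ^ (1 - τ))
          = (‖lam k‖ ^ (τ - 1) * ‖lam k‖ ^ (1 - τ)) * (μ * R ^ τ) := by ring
        _ = μ * R ^ τ := by rw [e1]; ring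
        _ = (μ * R ^ (τ - 1)) * R := by rw [e2]; ring
    have hlow : R ^ τ * ‖lam k‖ ^ (1 - τ) ≤ ‖lam (k+1)‖ := by
      have h' : (μ * ‖lam k‖ ^ (τ - 1)) * (R ^ τ * ‖lam k‖ ^ (1 - τ)) ≤
          (μ * ‖lam k‖ ^ (τ - 1)) * ‖lam (k+1)‖ := by rw [E]; exact ha
      exact le_of_mul_le_mul_left h' hσk0
    have hpos : 0 < ‖lam (k+1)‖ := lt_of_lt_of_le (by positivity) hlow
    have hlog : Real.log R - Real.log ‖lam (k+1)‖ ≤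
        (1 - τ) * (Real.log R - Real.log ‖lam k‖) := by
      have h1 : Real.log (R ^ τ * ‖lam k‖ ^ (1 - τ)) ≤ Real.log ‖lam (k+1)‖ :=
        Real.log_le_log (by positivity) hlow
      rw [Real.log_mul (by positivity) (by positivity), Real.log_rpow hR,
        Real.log_rpow hk0] at h1
      nlinarith [h1]
    exact ⟨hpos, hb, hlog, hc⟩
  -- induction on k
  have main : ∀ k, k ≤ N → 0 < ‖lam k‖ ∧ ‖lam k‖ ≤ R ∧
      Real.log R - Real.log ‖lam k‖ ≤ (1 - τ) ^ k * (Real.log R - Real.log ‖lam 0‖) := by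
    intro k
    induction k with
    | zero => exact fun _ => ⟨h00, h0, by simp⟩
    | succ m ih =>
      intro hm
      have hmN : m < N := lt_of_lt_of_le (Nat.lt_succ_self m) hm
      obtain ⟨p0, pR, plog⟩ := ih (le_of_lt hmN)
      obtain ⟨q0, qR, qlog, _⟩ := step m hmN p0 pR
      refine ⟨q0, qR, ?_⟩
      calc Real.log R - Real.log ‖lam (m+1)‖
          ≤ (1 - τ) * (Real.log R - Real.log ‖lam m‖) := qlog
        _ ≤ (1 - τ) * ((1 - τ) ^ m * (Real.log R - Real.log ‖lam 0‖)) :=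
            mul_le_mul_of_nonneg_left plog hθ0
        _ = (1 - τ) ^ (m+1) * (Real.log R - Real.log ‖lam 0‖) := by rw [pow_succ]; ring
  -- final assembly
  set M : ℕ := N - 1 with hMdef
  have hM : M + 1 = N := Nat.succ_pred_eq_of_pos hN
  obtain ⟨m0, mR, mlog⟩ := main M (by omega)
  obtain ⟨f0, fR, flog, fdist⟩ := step M (by omega) m0 mR
  rw [hM] at fdist
  set L : ℝ := Real.log R - Real.log ‖lam 0‖ with hLdef
  have hL0 : 0 ≤ L := by
    rw [hLdef]; have := Real.log_le_log h00 h0; linarith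
  set D : ℝ := Real.log R - Real.log ‖lam M‖ with hDdef
  have hD0 : 0 ≤ D := by
    rw [hDdef]; linarith [Real.log_le_log m0 mR]
  -- rewrite the goal's log of quotient
  rw [Real.log_div hR.ne' (ne_of_gt h00)]
  have hexpM : μ * ‖lam M‖ ^ (τ - 1) = (μ * R ^ (τ - 1)) * Real.exp ((1 - τ) * D) := by
    rw [Real.rpow_def_of_pos m0, Real.rpow_def_of_pos hR, mul_assoc, ← Real.exp_add]
    congr 2
    rw [hDdef]; ring
  rw [hexpM] at fdist
  have h1 : ‖lam N - lamstar‖ ≤ (Real.exp ((1 - τ) * D) - 1) * R := by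
    have h' : (μ * R ^ (τ - 1)) * ‖lam N - lamstar‖ ≤
        (μ * R ^ (τ - 1)) * ((Real.exp ((1 - τ) * D) - 1) * R) := by
      nlinarith [fdist]
    exact le_of_mul_le_mul_left h' hσs
  have hDL : (1 - τ) * D ≤ (1 - τ) ^ N * L := by
    calc (1 - τ) * D ≤ (1 - τ) * ((1 - τ) ^ M * L) := mul_le_mul_of_nonneg_left mlog hθ0
      _ = (1 - τ) ^ N * L := by rw [← hM, pow_succ]; ring
  have h2 : ‖lam N - lamstar‖ ≤ (Real.exp ((1 - τ) ^ N * L) - 1) * R :=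
    le_trans h1 (mul_le_mul_of_nonneg_right
      (sub_le_sub_right (Real.exp_le_exp.mpr hDL) 1) hR.le)
  have hx0 : 0 ≤ (1 - τ) ^ M * L := mul_nonneg (pow_nonneg hθ0 M) hL0
  have hconv : Real.exp ((1 - τ) * ((1 - τ) ^ M * L)) ≤
      (1 - τ) * Real.exp ((1 - τ) ^ M * L) + τ := by
    have h := convexOn_exp.2 (Set.mem_univ ((1 - τ) ^ M * L)) (Set.mem_univ (0:ℝ))
      hθ0 hτ0.le (by ring)
    simpa using h
  have h3 : Real.exp ((1 - τ) ^ N * L) - 1 ≤ (1 - τ) * (Real.exp ((1 - τ) ^ M * L) - 1) := by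
    have hpow : (1 - τ) ^ N * L = (1 - τ) * ((1 - τ) ^ M * L) := by
      rw [← hM, pow_succ]; ring
    rw [hpow]; linarith [hconv]
  constructor
  · calc ‖lam N - lamstar‖ ≤ (Real.exp ((1 - τ) ^ N * L) - 1) * R := h2
      _ ≤ ((1 - τ) * (Real.exp ((1 - τ) ^ M * L) - 1)) * R :=
          mul_le_mul_of_nonneg_right h3 hR.le
      _ = (1 - τ) * R * (Real.exp ((1 - τ) ^ M * L) - 1) := by ring
  · have hpM1 : (1 - τ) ^ M ≤ 1 := pow_le_one₀ hθ0 (by linarith)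
    have hconv2 : Real.exp ((1 - τ) ^ M * L) ≤
        (1 - τ) ^ M * Real.exp L + (1 - (1 - τ) ^ M) := by
      have h := convexOn_exp.2 (Set.mem_univ L) (Set.mem_univ (0:ℝ))
        (pow_nonneg hθ0 M) (show (0:ℝ) ≤ 1 - (1 - τ) ^ M by linarith) (by ring)
      simpa using h
    have hexpL : Real.exp L = R / ‖lam 0‖ := by
      rw [hLdef, Real.exp_sub, Real.exp_log hR, Real.exp_log h00]
    rw [hexpL] at hconv2
    have h4 : Real.exp ((1 - τ) ^ M * L) - 1 ≤ (1 - τ) ^ M * (R / ‖lam 0‖ - 1) := by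
      linarith [hconv2]
    calc (1 - τ) * R * (Real.exp ((1 - τ) ^ M * L) - 1)
        ≤ (1 - τ) * R * ((1 - τ) ^ M * (R / ‖lam 0‖ - 1)) :=
          mul_le_mul_of_nonneg_left h4 (by positivity)
      _ = R / ‖lam 0‖ * (R - ‖lam 0‖) * (1 - τ) ^ N := by
          rw [← hM, pow_succ]; field_simp
end

section
/- Let g : ℝⁿ → ℝ be convex, μ > 0, p ≥ 1. Suppose λ* ≠ 0 is a global minimizer of φ(λ) = g(λ) + (μ/(1+1/p))·‖λ‖^{1+1/p}. Let (λᵏ)_{k≥0} be a sequence in ℝⁿ with ‖λ⁰‖ ≥ ‖λ*‖ such that for every k ≥ 0, λᵏ⁺¹ is a global minimizer of λ ↦ g(λ) + (μ/2)·‖λᵏ‖^{(1/p)−1}·‖λ‖². Then for every k ≥ 0: ‖λᵏ⁺¹‖ ≤ ‖λᵏ‖ and ‖λᵏ‖ ≥ ‖λ*‖. -/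
/-!
Write `q = 1 + 1/p ∈ (1, 2]`. By weighted AM-GM, `‖z‖^q / q` lies below the quadratic
`‖λ*‖^(q-2) ‖z‖² / 2` up to a constant, with contact at `‖z‖ = ‖λ*‖`; hence `λ*` also minimizes
its own quadratic model `g + (μ/2) ‖λ*‖^(q-2) ‖·‖²`. Minimizers `x` of `g + c ‖·‖²` and `y` of
`g + d ‖·‖²` with `c ≤ d` satisfy `‖y‖ ≤ ‖x‖` and `c ‖x‖ ≤ d ‖y‖` (add the two quadratic-growth
inequalities given by strong convexity). As long as `‖λ*‖ ≤ ‖λᵏ‖`, the step weight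
`‖λᵏ‖^(q-2)` is at most `‖λ*‖^(q-2)`, so comparing `λᵏ⁺¹` with `λ*` gives `‖λ*‖ ≤ ‖λᵏ⁺¹‖` and
`‖λᵏ‖^(q-2) ‖λᵏ⁺¹‖ ≤ ‖λ*‖^(q-1) ≤ ‖λᵏ‖^(q-1)`, i.e. `‖λᵏ⁺¹‖ ≤ ‖λᵏ‖`.
-/

open Set Filter Topology

lemma Real.rpow_le_quadratic {q s x : ℝ} (hq0 : 0 ≤ q) (hq2 : q ≤ 2) (hs : 0 < s) (hx : 0 ≤ x) :
    x ^ q ≤ q / 2 * s ^ (q - 2) * x ^ 2 + (1 - q / 2) * s ^ q := by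
  have amgm := Real.geom_mean_le_arith_mean2_weighted (w₁ := q / 2) (w₂ := 1 - q / 2)
    (by linarith) (by linarith) (sq_nonneg x) (sq_nonneg s) (by ring)
  have hx_pow : (x ^ 2) ^ (q / 2) = x ^ q := by
    rw [← Real.rpow_natCast_mul hx]; congr 1; push_cast; ring
  have hs_pow : s ^ (q - 2) * (s ^ 2) ^ (1 - q / 2) = 1 := by
    rw [← Real.rpow_natCast_mul hs.le, ← Real.rpow_add hs]; ring_nf; exact Real.rpow_zero s
  have hs_sq : s ^ (q - 2) * s ^ 2 = s ^ q := by
    rw [← Real.rpow_natCast, ← Real.rpow_add hs]; norm_num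
  calc x ^ q = s ^ (q - 2) * ((x ^ 2) ^ (q / 2) * (s ^ 2) ^ (1 - q / 2)) := by
        rw [hx_pow, mul_left_comm, hs_pow, mul_one]
    _ ≤ s ^ (q - 2) * (q / 2 * x ^ 2 + (1 - q / 2) * s ^ 2) := by gcongr
    _ = q / 2 * s ^ (q - 2) * x ^ 2 + (1 - q / 2) * s ^ q := by rw [← hs_sq]; ring

lemma isMinOn_quadratic_model_of_isMinOn_rpow {E : Type*} [NormedAddCommGroup E]
    {g : E → ℝ} {μ q : ℝ} (hμ : 0 ≤ μ) (hq0 : 0 < q) (hq2 : q ≤ 2) {x : E} (hx : x ≠ 0)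
    (hmin : IsMinOn (fun z ↦ g z + μ / q * ‖z‖ ^ q) univ x) :
    IsMinOn (fun z ↦ g z + μ / 2 * ‖x‖ ^ (q - 2) * ‖z‖ ^ 2) univ x := by
  have hs : 0 < ‖x‖ := norm_pos_iff.mpr hx
  refine isMinOn_univ_iff.mpr fun z ↦ ?_
  have hxz := isMinOn_univ_iff.mp hmin z
  have hmodel := mul_le_mul_of_nonneg_left
    (Real.rpow_le_quadratic hq0.le hq2 hs (norm_nonneg z)) (div_nonneg hμ hq0.le)
  have hx_sq : ‖x‖ ^ (q - 2) * ‖x‖ ^ 2 = ‖x‖ ^ q := by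
    rw [← Real.rpow_natCast, ← Real.rpow_add hs]; norm_num
  have hcoef : μ / q * (q / 2 * ‖x‖ ^ (q - 2) * ‖z‖ ^ 2 + (1 - q / 2) * ‖x‖ ^ q)
      = μ / 2 * ‖x‖ ^ (q - 2) * ‖z‖ ^ 2 + (μ / q - μ / 2) * ‖x‖ ^ q := by
    field_simp
  simp only [mul_assoc, hx_sq] at hxz hcoef ⊢
  linarith

lemma StrongConvexOn.add_sq_norm_sub_le_of_isMinOn {E : Type*} [NormedAddCommGroup E]
    [NormedSpace ℝ E] {s : Set E} {m : ℝ} {f : E → ℝ} {x y : E} (hf : StrongConvexOn s m f)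
    (hx : x ∈ s) (hmin : IsMinOn f s x) (hy : y ∈ s) :
    f x + m / 2 * ‖y - x‖ ^ 2 ≤ f y := by
  have hgrowth : ∀ θ ∈ Ioo (0 : ℝ) 1, f x + (1 - θ) * (m / 2 * ‖y - x‖ ^ 2) ≤ f y := by
    rintro θ ⟨hθ0, hθ1⟩
    have hconv := hf.2 hy hx hθ0.le (sub_nonneg.mpr hθ1.le) (add_sub_cancel θ 1)
    have hxθ := hmin (hf.1 hy hx hθ0.le (sub_nonneg.mpr hθ1.le) (add_sub_cancel θ 1))
    simp only [smul_eq_mul] at hconv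
    have : θ * (f x + (1 - θ) * (m / 2 * ‖y - x‖ ^ 2)) ≤ θ * f y := by nlinarith [hxθ.out]
    exact le_of_mul_le_mul_left this hθ0
  have hlim : Tendsto (fun θ : ℝ ↦ f x + (1 - θ) * (m / 2 * ‖y - x‖ ^ 2)) (𝓝[>] 0)
      (𝓝 (f x + (1 - 0) * (m / 2 * ‖y - x‖ ^ 2))) :=
    ((Continuous.tendsto (by fun_prop) 0)).mono_left nhdsWithin_le_nhds
  simpa using le_of_tendsto hlim (eventually_of_mem (Ioo_mem_nhdsGT one_pos) hgrowth)

lemma ConvexOn.add_sq_norm_sub_le_of_isMinOn_add_sq_norm {E : Type*} [NormedAddCommGroup E]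
    [InnerProductSpace ℝ E] {g : E → ℝ} (hg : ConvexOn ℝ univ g) {c : ℝ} {x : E}
    (hmin : IsMinOn (fun z ↦ g z + c * ‖z‖ ^ 2) univ x) (y : E) :
    g x + c * ‖x‖ ^ 2 + c * ‖y - x‖ ^ 2 ≤ g y + c * ‖y‖ ^ 2 := by
  have hstrong : StrongConvexOn univ (2 * c) fun z ↦ g z + c * ‖z‖ ^ 2 := by
    rw [strongConvexOn_iff_convex]
    convert hg using 2
    ring
  simpa using hstrong.add_sq_norm_sub_le_of_isMinOn (mem_univ x) hmin (mem_univ y)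

lemma le_and_mul_le_mul_of_add_mul_sq_sub_le {a s c d : ℝ} (hc : 0 ≤ c) (hcd : c ≤ d)
    (hd : 0 < d) (ha : 0 ≤ a) (h : (c + d) * (a - s) ^ 2 ≤ (d - c) * (a ^ 2 - s ^ 2)) :
    s ≤ a ∧ c * a ≤ d * s := by
  have hsa : s ≤ a := by
    by_contra! has
    nlinarith [mul_pos (by linarith : 0 < c + d) (pow_pos (sub_pos.mpr has) 2),
      mul_nonneg (mul_nonneg (sub_nonneg.mpr hcd) (sub_pos.mpr has).le)
        (by linarith : 0 ≤ s + a)]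
  refine ⟨hsa, ?_⟩
  rcases hsa.eq_or_lt with rfl | hsa
  · exact mul_le_mul_of_nonneg_right hcd ha
  · by_contra! hlt
    nlinarith [mul_pos (sub_pos.mpr hsa) (sub_pos.mpr hlt)]

lemma norm_le_and_mul_norm_le_of_isMinOn_add_sq_norm {E : Type*} [NormedAddCommGroup E]
    [InnerProductSpace ℝ E] {g : E → ℝ} (hg : ConvexOn ℝ univ g) {c d : ℝ} (hc : 0 ≤ c)
    (hcd : c ≤ d) (hd : 0 < d) {x y : E}
    (hx : IsMinOn (fun z ↦ g z + c * ‖z‖ ^ 2) univ x)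
    (hy : IsMinOn (fun z ↦ g z + d * ‖z‖ ^ 2) univ y) :
    ‖y‖ ≤ ‖x‖ ∧ c * ‖x‖ ≤ d * ‖y‖ := by
  have hxy := hg.add_sq_norm_sub_le_of_isMinOn_add_sq_norm hx y
  have hyx := hg.add_sq_norm_sub_le_of_isMinOn_add_sq_norm hy x
  have hdist : (‖x‖ - ‖y‖) ^ 2 ≤ ‖y - x‖ ^ 2 := by
    rw [← sq_abs, norm_sub_rev]
    exact pow_le_pow_left₀ (abs_nonneg _) (abs_norm_sub_norm_le x y) 2
  refine le_and_mul_le_mul_of_add_mul_sq_sub_le hc hcd hd (norm_nonneg x) ?_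
  rw [norm_sub_rev] at hyx
  nlinarith

lemma le_of_mul_rpow_sub_two_mul_le {μ q s t a : ℝ} (hμ : 0 < μ) (hq : 1 ≤ q) (hs : 0 < s)
    (hst : s ≤ t) (h : μ * t ^ (q - 2) * a ≤ μ * s ^ (q - 2) * s) : a ≤ t := by
  have ht : 0 < t := hs.trans_le hst
  have hpow : ∀ r : ℝ, 0 < r → r ^ (q - 2) * r = r ^ (q - 1) := fun r hr ↦ by
    rw [← Real.rpow_add_one hr.ne']; ring_nf
  refine le_of_mul_le_mul_left ?_ (Real.rpow_pos_of_pos ht (q - 2))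
  rw [mul_assoc, mul_assoc] at h
  calc t ^ (q - 2) * a ≤ s ^ (q - 2) * s := le_of_mul_le_mul_left h hμ
    _ = s ^ (q - 1) := hpow s hs
    _ ≤ t ^ (q - 1) := Real.rpow_le_rpow hs.le hst (by linarith)
    _ = t ^ (q - 2) * t := (hpow t ht).symm

/-- For the fixed point iteration started with `‖λ⁰‖ ≥ ‖λ*‖`, the norms of the iterates
decrease monotonically and stay above `‖λ*‖`. -/
theorem fixed_point_iteration_norm_monotone_above
    (n : ℕ) (g : EuclideanSpace ℝ (Fin n) → ℝ)
    (hg : ConvexOn ℝ Set.univ g) (μ p : ℝ) (hμ : 0 < μ) (hp : 1 ≤ p)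
    (lamstar : EuclideanSpace ℝ (Fin n)) (hstar0 : lamstar ≠ 0)
    (hstar : ∀ z : EuclideanSpace ℝ (Fin n),
      g lamstar + μ / (1 + 1 / p) * ‖lamstar‖ ^ (1 + 1 / p) ≤
        g z + μ / (1 + 1 / p) * ‖z‖ ^ (1 + 1 / p))
    (lam : ℕ → EuclideanSpace ℝ (Fin n))
    (h0 : ‖lamstar‖ ≤ ‖lam 0‖)
    (hmin : ∀ k : ℕ, ∀ z : EuclideanSpace ℝ (Fin n),
      g (lam (k + 1)) + μ / 2 * ‖lam k‖ ^ (1 / p - 1) * ‖lam (k + 1)‖ ^ 2 ≤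
        g z + μ / 2 * ‖lam k‖ ^ (1 / p - 1) * ‖z‖ ^ 2) :
    ∀ k : ℕ, ‖lam (k + 1)‖ ≤ ‖lam k‖ ∧ ‖lamstar‖ ≤ ‖lam k‖ := by
  have hp0 : 0 < p := one_pos.trans_le hp
  have hinv_le : 1 / p ≤ 1 := (div_le_one hp0).mpr hp
  have hexp : 1 / p - 1 = (1 + 1 / p) - 2 := by ring
  have hs : 0 < ‖lamstar‖ := norm_pos_iff.mpr hstar0
  have hstar_model := isMinOn_quadratic_model_of_isMinOn_rpow hμ.le (by positivity)
    (by linarith) hstar0 (isMinOn_univ_iff.mpr hstar)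
  rw [← hexp] at hstar_model
  have step : ∀ k, ‖lamstar‖ ≤ ‖lam k‖ → ‖lam (k + 1)‖ ≤ ‖lam k‖ ∧ ‖lamstar‖ ≤ ‖lam (k + 1)‖ := by
    intro k hk
    have hweight : μ / 2 * ‖lam k‖ ^ (1 / p - 1) ≤ μ / 2 * ‖lamstar‖ ^ (1 / p - 1) := by
      gcongr ?_ * ?_
      exact Real.rpow_le_rpow_of_nonpos hs hk (by linarith)
    obtain ⟨h_above, h_scaled⟩ := norm_le_and_mul_norm_le_of_isMinOn_add_sq_norm hg
      (by positivity) hweight (by positivity) (isMinOn_univ_iff.mpr (hmin k)) hstar_model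
    rw [hexp] at h_scaled
    exact ⟨le_of_mul_rpow_sub_two_mul_le (by positivity) (by simp [hp0.le]) hs hk h_scaled, h_above⟩
  have above : ∀ k, ‖lamstar‖ ≤ ‖lam k‖ := fun k ↦ Nat.rec h0 (fun k hk ↦ (step k hk).2) k
  exact fun k ↦ ⟨(step k (above k)).1, above k⟩
end

section
/- Let f : ℝⁿ → ℝ be convex, c ∈ ℝⁿ, and 0 < λ₁ ≤ λ₂. Let y₁ be a global minimizer of y ↦ f(y) + (1/(2λ₁))·‖y − c‖² and y₂ a global minimizer of y ↦ f(y) + (1/(2λ₂))·‖y − c‖². Then ‖y₁ − c‖ ≤ ‖y₂ − c‖ and λ₁·‖y₂ − c‖ ≤ λ₂·‖y₁ − c‖. -/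
/-! Minimality of `y` for `f + ‖· - c‖² / (2λ)`, compared with the points of the segment from `y`
to any `w`, makes `(c - y) / λ` a subgradient of `f` at `y`. Adding the two subgradient
inequalities for `y₁` and `y₂` and applying Cauchy–Schwarz to the residuals `sᵢ = ‖yᵢ - c‖` gives
`(s₁ - s₂) (λ₂ s₁ - λ₁ s₂) ≤ 0`, and both claims follow from `λ₁ ≤ λ₂` by sign considerations. -/

open Filter Topology
open scoped RealInnerProductSpace

lemma le_of_forall_le_add_mul {A B K : ℝ} (h : ∀ t : ℝ, 0 < t → t ≤ 1 → A ≤ B + t * K) :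
    A ≤ B := by
  have hlim : Tendsto (fun t : ℝ => B + t * K) (𝓝[>] 0) (𝓝 B) := by
    have : Continuous fun t : ℝ => B + t * K := by fun_prop
    simpa using (this.tendsto 0).mono_left nhdsWithin_le_nhds
  exact ge_of_tendsto hlim (by
    filter_upwards [Ioc_mem_nhdsGT one_pos] with t ht using h t ht.1 ht.2)

lemma residual_le_of_sq_add_sq_le {s t lam₁ lam₂ : ℝ} (hs : 0 ≤ s) (h1 : 0 < lam₁)
    (h12 : lam₁ ≤ lam₂) (h : lam₂ * s ^ 2 + lam₁ * t ^ 2 ≤ (lam₁ + lam₂) * (s * t)) :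
    s ≤ t ∧ lam₁ * t ≤ lam₂ * s := by
  have hfactor : (s - t) * (lam₂ * s - lam₁ * t) ≤ 0 := by nlinarith
  have hscale : lam₁ * s ≤ lam₂ * s := mul_le_mul_of_nonneg_right h12 hs
  constructor
  · by_contra! hts
    have : lam₁ * t < lam₁ * s := mul_lt_mul_of_pos_left hts h1
    nlinarith [mul_pos (sub_pos.2 hts) (sub_pos.2 (this.trans_le hscale))]
  · by_contra! hst
    have : s < t := lt_of_mul_lt_mul_left (hscale.trans_lt hst) h1.le
    nlinarith [mul_pos_of_neg_of_neg (sub_neg.2 this) (sub_neg.2 hst)]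

section InnerProductSpace

variable {E : Type*} [NormedAddCommGroup E] [InnerProductSpace ℝ E]

lemma norm_add_smul_sub_sub_sq (y w c : E) (t : ℝ) :
    ‖y + t • (w - y) - c‖ ^ 2 =
      ‖y - c‖ ^ 2 + 2 * t * ⟪y - c, w - y⟫ + t ^ 2 * ‖w - y‖ ^ 2 := by
  rw [show y + t • (w - y) - c = (y - c) + t • (w - y) by abel, norm_add_sq_real,
    real_inner_smul_right, norm_smul, Real.norm_eq_abs, mul_pow, sq_abs]
  ring

lemma real_inner_sub_sub_eq_norm_sq_sub (c y w : E) :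
    ⟪c - y, w - y⟫ = ‖y - c‖ ^ 2 - ⟪y - c, w - c⟫ := by
  rw [show c - y = -(y - c) by abel, show w - y = (w - c) - (y - c) by abel, inner_neg_left,
    inner_sub_right, real_inner_self_eq_norm_sq]
  ring

lemma ConvexOn.inner_le_of_forall_add_sq_le {f : E → ℝ} (hf : ConvexOn ℝ Set.univ f)
    {lam : ℝ} (hlam : 0 < lam) {c y : E}
    (hy : ∀ z, f y + 1 / (2 * lam) * ‖y - c‖ ^ 2 ≤ f z + 1 / (2 * lam) * ‖z - c‖ ^ 2)
    (w : E) :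
    ⟪c - y, w - y⟫ ≤ lam * (f w - f y) := by
  refine le_of_forall_le_add_mul (K := ‖w - y‖ ^ 2 / 2) fun t ht ht1 => ?_
  have hconv : f (y + t • (w - y)) ≤ (1 - t) * f y + t * f w := by
    have := hf.2 (Set.mem_univ y) (Set.mem_univ w) (sub_nonneg.2 ht1) ht.le (by ring)
    rwa [show (1 - t) • y + t • w = y + t • (w - y) by module] at this
  have hmin := hy (y + t • (w - y))
  rw [norm_add_smul_sub_sub_sq] at hmin
  have hdesc : t * (f y - f w) ≤
      1 / (2 * lam) * (2 * t * ⟪y - c, w - y⟫ + t ^ 2 * ‖w - y‖ ^ 2) := by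
    linarith
  have hscaled := mul_le_mul_of_nonneg_left hdesc hlam.le
  field_simp at hscaled
  rw [show c - y = -(y - c) by abel, inner_neg_left]
  linarith

end InnerProductSpace

/-- Monotonicity of the proximal residual: if `0 < λ₁ ≤ λ₂` and `yᵢ = Prox_{λᵢ f}(c)`,
then `‖y₁ − c‖ ≤ ‖y₂ − c‖` and `λ₁‖y₂ − c‖ ≤ λ₂‖y₁ − c‖`. -/
theorem prox_residual_monotone
    (n : ℕ) (f : EuclideanSpace ℝ (Fin n) → ℝ)
    (hf : ConvexOn ℝ Set.univ f) (c : EuclideanSpace ℝ (Fin n))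
    (lam₁ lam₂ : ℝ) (h1 : 0 < lam₁) (h12 : lam₁ ≤ lam₂)
    (y₁ y₂ : EuclideanSpace ℝ (Fin n))
    (hy₁ : ∀ z : EuclideanSpace ℝ (Fin n),
      f y₁ + 1 / (2 * lam₁) * ‖y₁ - c‖ ^ 2 ≤ f z + 1 / (2 * lam₁) * ‖z - c‖ ^ 2)
    (hy₂ : ∀ z : EuclideanSpace ℝ (Fin n),
      f y₂ + 1 / (2 * lam₂) * ‖y₂ - c‖ ^ 2 ≤ f z + 1 / (2 * lam₂) * ‖z - c‖ ^ 2) :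
    ‖y₁ - c‖ ≤ ‖y₂ - c‖ ∧ lam₁ * ‖y₂ - c‖ ≤ lam₂ * ‖y₁ - c‖ := by
  have h2 : 0 < lam₂ := h1.trans_le h12
  have hsub₁ := hf.inner_le_of_forall_add_sq_le h1 hy₁ y₂
  have hsub₂ := hf.inner_le_of_forall_add_sq_le h2 hy₂ y₁
  rw [real_inner_sub_sub_eq_norm_sq_sub] at hsub₁ hsub₂
  rw [real_inner_comm] at hsub₂
  have hsum : lam₂ * ‖y₁ - c‖ ^ 2 + lam₁ * ‖y₂ - c‖ ^ 2 ≤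
      (lam₁ + lam₂) * ⟪y₁ - c, y₂ - c⟫ := by
    linarith [mul_le_mul_of_nonneg_left hsub₁ h2.le, mul_le_mul_of_nonneg_left hsub₂ h1.le]
  refine residual_le_of_sq_add_sq_le (norm_nonneg _) h1 h12 (hsum.trans ?_)
  gcongr
  exact real_inner_le_norm _ _
end

section
/- Let f : ℝⁿ → ℝ be convex, c ∈ ℝⁿ, and 0 < λ₁ ≤ λ₂. Define T(λ) = λ·‖Prox_{λf}(c) − c‖, where Prox_{λf}(c) is the unique global minimizer of y ↦ f(y) + (1/(2λ))·‖y − c‖². Then (λ₂/λ₁)·T(λ₁) ≤ T(λ₂) ≤ (λ₂/λ₁)²·T(λ₁). -/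
set_option maxHeartbeats 1000000

open Filter Topology

lemma combo_norm_sq {n : ℕ} (u v : EuclideanSpace ℝ (Fin n)) (t : ℝ) :
    ‖(1 - t) • u + t • v‖ ^ 2
      = (1 - t) * ‖u‖ ^ 2 + t * ‖v‖ ^ 2 - t * (1 - t) * ‖v - u‖ ^ 2 := by
  rw [norm_add_sq_real, real_inner_smul_left, real_inner_smul_right,
    norm_smul, norm_smul, norm_sub_sq_real, Real.norm_eq_abs, Real.norm_eq_abs,
    mul_pow, mul_pow, sq_abs, sq_abs, real_inner_comm v u]
  ring

/-- Strong minimality: if `y` minimizes `f + C‖·−c‖²` with `f` convex and `C > 0`,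
then the objective grows at least `C‖z−y‖²` away from `y`. -/
lemma prox_strong_min {n : ℕ} (f : EuclideanSpace ℝ (Fin n) → ℝ)
    (hf : ConvexOn ℝ Set.univ f) (c : EuclideanSpace ℝ (Fin n))
    (C : ℝ) (hC : 0 < C) (y : EuclideanSpace ℝ (Fin n))
    (hy : ∀ z : EuclideanSpace ℝ (Fin n),
      f y + C * ‖y - c‖ ^ 2 ≤ f z + C * ‖z - c‖ ^ 2)
    (z : EuclideanSpace ℝ (Fin n)) :
    f y + C * ‖y - c‖ ^ 2 + C * ‖z - y‖ ^ 2 ≤ f z + C * ‖z - c‖ ^ 2 := by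
  have hstep : ∀ t ∈ Set.Ioo (0 : ℝ) 1,
      C * (1 - t) * ‖z - y‖ ^ 2
        ≤ f z + C * ‖z - c‖ ^ 2 - (f y + C * ‖y - c‖ ^ 2) := by
    intro t ht
    obtain ⟨ht0, ht1⟩ := ht
    have hconv := hf.2 (Set.mem_univ y) (Set.mem_univ z)
      (by linarith : (0:ℝ) ≤ 1 - t) ht0.le (by ring)
    simp only [smul_eq_mul] at hconv
    have hmin := hy ((1 - t) • y + t • z)
    have h1 : ((1 - t) • y + t • z) - c = (1 - t) • (y - c) + t • (z - c) := by
      module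
    have hnorm : ‖((1 - t) • y + t • z) - c‖ ^ 2
        = (1 - t) * ‖y - c‖ ^ 2 + t * ‖z - c‖ ^ 2 - t * (1 - t) * ‖z - y‖ ^ 2 := by
      rw [h1, combo_norm_sq]
      congr 3
      · congr 1
        abel
    rw [hnorm] at hmin
    have key : t * (C * (1 - t) * ‖z - y‖ ^ 2
        - (f z + C * ‖z - c‖ ^ 2 - (f y + C * ‖y - c‖ ^ 2))) ≤ t * 0 := by
      rw [mul_zero]
      nlinarith [hmin, hconv]
    have := le_of_mul_le_mul_left key ht0
    linarith
  have hmem : Set.Ioo (0:ℝ) 1 ∈ 𝓝[>] (0:ℝ) :=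
    Ioo_mem_nhdsGT_of_mem ⟨le_refl 0, zero_lt_one⟩
  have hlim : Tendsto (fun t : ℝ => C * (1 - t) * ‖z - y‖ ^ 2) (𝓝[>] (0:ℝ))
      (𝓝 (C * ‖z - y‖ ^ 2)) := by
    have hcont : Continuous (fun t : ℝ => C * (1 - t) * ‖z - y‖ ^ 2) := by
      continuity
    have h0 : Tendsto (fun t : ℝ => C * (1 - t) * ‖z - y‖ ^ 2) (𝓝 0)
        (𝓝 (C * ‖z - y‖ ^ 2)) := by
      simpa using hcont.tendsto 0
    exact h0.mono_left nhdsWithin_le_nhds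
  have hfin : C * ‖z - y‖ ^ 2
      ≤ f z + C * ‖z - c‖ ^ 2 - (f y + C * ‖y - c‖ ^ 2) :=
    le_of_tendsto hlim (Filter.eventually_of_mem hmem hstep)
  linarith

/-- For `T(λ) = λ‖Prox_{λf}(c) − c‖` and `0 < λ₁ ≤ λ₂`, one has
`(λ₂/λ₁)T(λ₁) ≤ T(λ₂) ≤ (λ₂/λ₁)²T(λ₁)`. -/
theorem prox_T_growth
    (n : ℕ) (f : EuclideanSpace ℝ (Fin n) → ℝ)
    (hf : ConvexOn ℝ Set.univ f) (c : EuclideanSpace ℝ (Fin n))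
    (lam₁ lam₂ : ℝ) (h1 : 0 < lam₁) (h12 : lam₁ ≤ lam₂)
    (y₁ y₂ : EuclideanSpace ℝ (Fin n))
    (hy₁ : ∀ z : EuclideanSpace ℝ (Fin n),
      f y₁ + 1 / (2 * lam₁) * ‖y₁ - c‖ ^ 2 ≤ f z + 1 / (2 * lam₁) * ‖z - c‖ ^ 2)
    (hy₂ : ∀ z : EuclideanSpace ℝ (Fin n),
      f y₂ + 1 / (2 * lam₂) * ‖y₂ - c‖ ^ 2 ≤ f z + 1 / (2 * lam₂) * ‖z - c‖ ^ 2) :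
    lam₂ / lam₁ * (lam₁ * ‖y₁ - c‖) ≤ lam₂ * ‖y₂ - c‖ ∧
      lam₂ * ‖y₂ - c‖ ≤ (lam₂ / lam₁) ^ 2 * (lam₁ * ‖y₁ - c‖) := by
  have h2 : 0 < lam₂ := lt_of_lt_of_le h1 h12
  set C₁ : ℝ := 1 / (2 * lam₁) with hC₁def
  set C₂ : ℝ := 1 / (2 * lam₂) with hC₂def
  have hC₁ : 0 < C₁ := by positivity
  have hC₂ : 0 < C₂ := by positivity
  have hC₂₁ : C₂ ≤ C₁ := by
    apply one_div_le_one_div_of_le (by linarith) (by linarith)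
  set A := ‖y₁ - c‖ with hA
  set B := ‖y₂ - c‖ with hB
  set D := ‖y₂ - y₁‖ with hD
  have hA0 : 0 ≤ A := norm_nonneg _
  have hB0 : 0 ≤ B := norm_nonneg _
  have hD0 : 0 ≤ D := norm_nonneg _
  have hs1 := prox_strong_min f hf c C₁ hC₁ y₁ hy₁ y₂
  have hs2 := prox_strong_min f hf c C₂ hC₂ y₂ hy₂ y₁
  have hDrev : ‖y₁ - y₂‖ = D := by rw [hD, norm_sub_rev]
  rw [hDrev] at hs2
  have hstar : (C₁ + C₂) * D ^ 2 ≤ (C₁ - C₂) * (B ^ 2 - A ^ 2) := by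
    simp only [← hA, ← hB, ← hD] at hs1 hs2
    nlinarith [hs1, hs2]
  have htri1 : A - B ≤ D := by
    have := norm_sub_norm_le (y₁ - c) (y₂ - c)
    have h' : (y₁ - c) - (y₂ - c) = -(y₂ - y₁) := by abel
    rw [h', norm_neg] at this
    simpa [hA, hB, hD] using this
  have htri2 : B ≤ A + D := by
    have := norm_add_le (y₂ - y₁) (y₁ - c)
    have h' : (y₂ - y₁) + (y₁ - c) = y₂ - c := by abel
    rw [h'] at this
    simpa [hA, hB, hD] using by linarith [this]
  -- Claim 1 : A ≤ B
  have hAB : A ≤ B := by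
    by_contra hcon
    push_neg at hcon
    have hDpos : 0 < D := by linarith
    have hpos : 0 < (C₁ + C₂) * D ^ 2 := by positivity
    have hsq : B ^ 2 ≤ A ^ 2 := pow_le_pow_left₀ hB0 hcon.le 2
    have hnp : (C₁ - C₂) * (B ^ 2 - A ^ 2) ≤ 0 :=
      mul_nonpos_of_nonneg_of_nonpos (by linarith) (by linarith)
    linarith
  -- Claim 2 : C₂ * B ≤ C₁ * A
  have hclaim2 : C₂ * B ≤ C₁ * A := by
    rcases eq_or_lt_of_le hD0 with hDz | hDpos
    · have hBA : B ≤ A := by linarith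
      nlinarith [hC₂, hC₂₁, hA0]
    · have hB2 : B ^ 2 ≤ (A + D) ^ 2 := pow_le_pow_left₀ hB0 htri2 2
      have hstar2 : (C₁ + C₂) * D ^ 2 ≤ (C₁ - C₂) * (2 * A * D + D ^ 2) := by
        nlinarith [hstar, mul_nonneg (sub_nonneg.2 hC₂₁)
          (by nlinarith : (0:ℝ) ≤ 2 * A * D + D ^ 2 - (B ^ 2 - A ^ 2))]
      have hCD : C₂ * D ≤ (C₁ - C₂) * A := by
        have h' : (2 * D) * (C₂ * D) ≤ (2 * D) * ((C₁ - C₂) * A) := by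
          nlinarith [hstar2]
        exact le_of_mul_le_mul_left h' (by linarith)
      have hmul := mul_le_mul_of_nonneg_left htri2 hC₂.le
      have hexp : C₂ * (A + D) = C₂ * A + C₂ * D := by ring
      have hexp2 : (C₁ - C₂) * A = C₁ * A - C₂ * A := by ring
      linarith
  have hkey : lam₁ * B ≤ lam₂ * A := by
    have hmul : (2 * lam₁ * lam₂) * (C₂ * B) ≤ (2 * lam₁ * lam₂) * (C₁ * A) :=
      mul_le_mul_of_nonneg_left hclaim2 (by positivity)
    rw [hC₁def, hC₂def] at hmul
    have e1 : (2 * lam₁ * lam₂) * (1 / (2 * lam₂) * B) = lam₁ * B := by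
      field_simp
    have e2 : (2 * lam₁ * lam₂) * (1 / (2 * lam₁) * A) = lam₂ * A := by
      field_simp
    rw [e1, e2] at hmul
    exact hmul
  constructor
  · have e : lam₂ / lam₁ * (lam₁ * A) = lam₂ * A := by
      field_simp
    rw [e]
    exact mul_le_mul_of_nonneg_left hAB h2.le
  · have e : (lam₂ / lam₁) ^ 2 * (lam₁ * A) = (lam₂ / lam₁) * (lam₂ * A) := by
      field_simp
    have e2 : lam₂ * B = (lam₂ / lam₁) * (lam₁ * B) := by
      field_simp
    rw [e, e2]
    exact mul_le_mul_of_nonneg_left hkey (by positivity)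
end

section
/- Let f : ℝⁿ → ℝ be convex, c ∈ ℝⁿ, and t₁, t₂ > 0. Let x₁ be a global minimizer of y ↦ f(y) + (1/(2t₁))·‖y − c‖² and x₂ a global minimizer of y ↦ f(y) + (1/(2t₂))·‖y − c‖² (so that g₁ = (c − x₁)/t₁ and g₂ = (c − x₂)/t₂ are subgradients of f at x₁ and x₂ respectively). Then ‖x₁ − x₂‖ ≤ |t₁ − t₂| · ‖g₂‖, i.e., ‖x₁ − x₂‖ ≤ |t₁ − t₂| · ‖c − x₂‖ / t₂. -/
open RealInnerProductSpace

lemma prox_subgrad_aux {E : Type*} [NormedAddCommGroup E] [InnerProductSpace ℝ E]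
    (f : E → ℝ) (hf : ConvexOn ℝ Set.univ f) (c x : E) (t : ℝ) (ht : 0 < t)
    (hx : ∀ z : E, f x + 1 / (2 * t) * ‖x - c‖ ^ 2 ≤ f z + 1 / (2 * t) * ‖z - c‖ ^ 2)
    (z : E) : f x + (1 / t) * ⟪c - x, z - x⟫ ≤ f z := by
  set I : ℝ := ⟪x - c, z - x⟫ with hI
  set N : ℝ := ‖z - x‖ ^ 2 with hN
  set a : ℝ := 1 / (2 * t) with ha
  have ha0 : 0 < a := by positivity
  have hN0 : 0 ≤ N := by positivity
  have key : ∀ s : ℝ, 0 < s → s ≤ 1 → f x - f z - (1 / t) * I ≤ s * (a * N) := by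
    intro s hs hs1
    have hconv := hf.2 (Set.mem_univ x) (Set.mem_univ z)
      (by linarith : (0:ℝ) ≤ 1 - s) (le_of_lt hs) (by ring)
    have hy : (1 - s) • x + s • z = x + s • (z - x) := by
      rw [smul_sub, sub_smul, one_smul]; abel
    rw [hy] at hconv
    have hmin := hx (x + s • (z - x))
    have hnorm : ‖x + s • (z - x) - c‖ ^ 2 = ‖x - c‖ ^ 2 + 2 * s * I + s ^ 2 * N := by
      have h1 : x + s • (z - x) - c = (x - c) + s • (z - x) := by abel
      rw [h1, norm_add_sq_real, real_inner_smul_right, norm_smul, Real.norm_eq_abs,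
        mul_pow, sq_abs, hI, hN]
      ring
    rw [hnorm] at hmin
    simp only [smul_eq_mul] at hconv
    have hdiv : s * f x ≤ s * f z + 2 * a * s * I + a * s ^ 2 * N := by nlinarith [hmin, hconv]
    have h2a : 2 * a = 1 / t := by rw [ha]; field_simp
    have : f x ≤ f z + (1 / t) * I + a * s * N := by
      rw [← h2a]
      have := mul_le_mul_of_nonneg_left hdiv (le_of_lt (inv_pos.mpr hs))
      have hs' : s ≠ 0 := ne_of_gt hs
      field_simp at this ⊢
      nlinarith [this]
    nlinarith
  have hL : f x - f z - (1 / t) * I ≤ 0 := by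
    apply le_of_forall_pos_le_add
    intro ε hε
    set K : ℝ := a * N with hK
    have hK0 : 0 ≤ K := by positivity
    have hs0 : 0 < min 1 (ε / (K + 1)) := lt_min one_pos (by positivity)
    have := key _ hs0 (min_le_left _ _)
    have h1 : min 1 (ε / (K + 1)) * K ≤ (ε / (K + 1)) * K :=
      mul_le_mul_of_nonneg_right (min_le_right _ _) hK0
    have h2 : (ε / (K + 1)) * K ≤ ε := by
      rw [div_mul_eq_mul_div, div_le_iff₀ (by positivity)]
      nlinarith
    linarith
  have hflip : ⟪c - x, z - x⟫ = -I := by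
    rw [hI, ← neg_sub x c, inner_neg_left]
  rw [hflip]
  linarith

/-- Lipschitz-type dependence of the proximal point on the parameter:
if `xᵢ = Prox_{tᵢ f}(c)` then `‖x₁ − x₂‖ ≤ |t₁ − t₂| ‖c − x₂‖ / t₂`. -/
theorem prox_parameter_lipschitz
    (n : ℕ) (f : EuclideanSpace ℝ (Fin n) → ℝ)
    (hf : ConvexOn ℝ Set.univ f) (c : EuclideanSpace ℝ (Fin n))
    (t₁ t₂ : ℝ) (ht₁ : 0 < t₁) (ht₂ : 0 < t₂)
    (x₁ x₂ : EuclideanSpace ℝ (Fin n))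
    (hx₁ : ∀ z : EuclideanSpace ℝ (Fin n),
      f x₁ + 1 / (2 * t₁) * ‖x₁ - c‖ ^ 2 ≤ f z + 1 / (2 * t₁) * ‖z - c‖ ^ 2)
    (hx₂ : ∀ z : EuclideanSpace ℝ (Fin n),
      f x₂ + 1 / (2 * t₂) * ‖x₂ - c‖ ^ 2 ≤ f z + 1 / (2 * t₂) * ‖z - c‖ ^ 2) :
    ‖x₁ - x₂‖ ≤ |t₁ - t₂| * ‖c - x₂‖ / t₂ := by
  have h1 := prox_subgrad_aux f hf c x₁ t₁ ht₁ hx₁ x₂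
  have h2 := prox_subgrad_aux f hf c x₂ t₂ ht₂ hx₂ x₁
  set d := x₁ - x₂ with hd
  set B : ℝ := ⟪c - x₂, d⟫ with hB
  have hA : (⟪c - x₁, x₂ - x₁⟫ : ℝ) = ‖d‖ ^ 2 - B := by
    have e1 : c - x₁ = (c - x₂) - d := by rw [hd]; abel
    have e2 : x₂ - x₁ = -d := by rw [hd]; abel
    rw [e1, e2, inner_neg_right, inner_sub_left, real_inner_self_eq_norm_sq]
    ring
  rw [hA] at h1
  have hsum : (1 / t₁) * (‖d‖ ^ 2 - B) + (1 / t₂) * B ≤ 0 := by linarith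
  have hmain : ‖d‖ ^ 2 ≤ ((t₂ - t₁) / t₂) * B := by
    have h3 : (1 / t₁) * ‖d‖ ^ 2 ≤ (1 / t₁ - 1 / t₂) * B := by linarith [hsum]
    have h4 : (1 / t₁ - 1 / t₂) * B = (1 / t₁) * (((t₂ - t₁) / t₂) * B) := by
      field_simp
    rw [h4] at h3
    have := mul_le_mul_of_nonneg_left h3 (le_of_lt ht₁)
    have ht₁' : t₁ ≠ 0 := ne_of_gt ht₁
    calc ‖d‖ ^ 2 = t₁ * ((1 / t₁) * ‖d‖ ^ 2) := by field_simp
      _ ≤ t₁ * ((1 / t₁) * (((t₂ - t₁) / t₂) * B)) := this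
      _ = ((t₂ - t₁) / t₂) * B := by field_simp
  have hcs : |B| ≤ ‖c - x₂‖ * ‖d‖ := abs_real_inner_le_norm _ _
  have habs : ((t₂ - t₁) / t₂) * B ≤ (|t₁ - t₂| / t₂) * (‖c - x₂‖ * ‖d‖) := by
    have h5 : ((t₂ - t₁) / t₂) * B ≤ |((t₂ - t₁) / t₂) * B| := le_abs_self _
    have h6 : |((t₂ - t₁) / t₂) * B| = (|t₁ - t₂| / t₂) * |B| := by
      rw [abs_mul, abs_div, abs_of_pos ht₂, abs_sub_comm]
    rw [h6] at h5
    have h7 : (|t₁ - t₂| / t₂) * |B| ≤ (|t₁ - t₂| / t₂) * (‖c - x₂‖ * ‖d‖) :=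
      mul_le_mul_of_nonneg_left hcs (by positivity)
    linarith
  rcases eq_or_lt_of_le (norm_nonneg d) with hz | hz
  · rw [← hz]; positivity
  · have : ‖d‖ ^ 2 ≤ (|t₁ - t₂| * ‖c - x₂‖ / t₂) * ‖d‖ := by
      calc ‖d‖ ^ 2 ≤ ((t₂ - t₁) / t₂) * B := hmain
        _ ≤ (|t₁ - t₂| / t₂) * (‖c - x₂‖ * ‖d‖) := habs
        _ = (|t₁ - t₂| * ‖c - x₂‖ / t₂) * ‖d‖ := by ring
    nlinarith [this, hz]
end
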